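/- arXiv:2511.13582 — 15 statements merged into one kernel-verified Lean document; each statement's English description precedes it below -/
import Mathlib

section
/- Define f : List ℕ → List ℕ by f [] = [], f [a] = [a], and f (a :: b :: L) = if a = b then (a+1) :: L else a :: f (b :: L), and define step(L) := f (0 :: L). Then for every natural number n, iterating step n times starting from the empty list yields exactly the list (List.range t(n)).map (fun i => i + bit_i(n+1)), where t(n) := ⌊log₂(n+1)⌋. In other words, after n appends the U-MMB structure consists of exactly t(n) mountains, and the mountain at position i (counting from 0 at the right end) has height s_i = i + bit_i(n+1). -/
/-- The `i`-th binary digit of `m`. -/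
def bit (i m : ℕ) : ℕ := m / 2 ^ i % 2

/-- One pass of the lazy-merge operation on a list of mountain heights
(rightmost mountain first). -/
def f : List ℕ → List ℕ
  | [] => []
  | [a] => [a]
  | a :: b :: L => if a = b then (a + 1) :: L else a :: f (b :: L)

/-- The U-MMB append operation on the list of mountain heights. -/
def step (L : List ℕ) : List ℕ := f (0 :: L)

/-- The claimed shape of the list after `m - 1` appends. -/
def g (m : ℕ) : List ℕ := (List.range (Nat.log 2 m)).map (fun i => i + bit i m)

lemma bit_succ (i m : ℕ) : bit (i + 1) m = bit i (m / 2) := by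
  simp [bit, Nat.div_div_eq_div_mul, pow_succ, mul_comm]

lemma f_map_succ : ∀ L : List ℕ, f (L.map (· + 1)) = (f L).map (· + 1)
  | [] => rfl
  | [a] => rfl
  | a :: b :: L => by
    by_cases h : a = b
    · simp [f, h]
    · have h' : ¬(a + 1 = b + 1) := by omega
      simp only [List.map_cons, f, if_neg h, if_neg h']
      rw [show (b + 1) :: L.map (· + 1) = (b :: L).map (· + 1) from rfl,
        f_map_succ (b :: L)]

lemma log_two_rec {m : ℕ} (h : 2 ≤ m) : Nat.log 2 m = Nat.log 2 (m / 2) + 1 :=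
  Nat.log_of_one_lt_of_le one_lt_two h

lemma g_cons {m : ℕ} (h : 2 ≤ m) :
    g m = (m % 2) :: (g (m / 2)).map (· + 1) := by
  rw [g, log_two_rec h, List.range_succ_eq_map]
  simp only [List.map_cons, List.map_map, g]
  congr 1
  · simp [bit]
  · apply List.map_congr_left
    intro i _
    simp only [Function.comp_apply, bit_succ, Nat.succ_eq_add_one]
    omega

lemma step_g : ∀ m, 1 ≤ m → step (g m) = g (m + 1) := by
  intro m
  induction m using Nat.strong_induction_on with
  | _ m ih =>
    intro hm
    rcases Nat.lt_or_ge m 2 with h2 | h2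
    · interval_cases m
      have h1 : g 1 = [] := by simp [g, Nat.log_one_right]
      have hlog : Nat.log 2 2 = 1 := by rw [log_two_rec le_rfl]; simp [Nat.log_one_right]
      rw [h1]
      show [0] = g 2
      rw [g, hlog]
      norm_num [List.range_succ, bit]
    rcases Nat.even_or_odd m with ⟨k, hk⟩ | ⟨k, hk⟩
    · -- m = 2k, k ≥ 1
      have hk1 : 1 ≤ k := by omega
      have e1 : m % 2 = 0 := by omega
      have e2 : m / 2 = k := by omega
      have e3 : (m + 1) % 2 = 1 := by omega
      have e4 : (m + 1) / 2 = k := by omega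
      rw [g_cons h2, e1, e2, step]
      show f (0 :: 0 :: _) = _
      rw [f, if_pos rfl, g_cons (by omega : 2 ≤ m + 1), e3, e4]
    · -- m = 2k + 1, k ≥ 1
      have hk1 : 1 ≤ k := by omega
      have e1 : m % 2 = 1 := by omega
      have e2 : m / 2 = k := by omega
      have e3 : (m + 1) % 2 = 0 := by omega
      have e4 : (m + 1) / 2 = k + 1 := by omega
      rw [g_cons h2, e1, e2, step, f, if_neg (by omega)]
      rw [show (1 : ℕ) :: (g k).map (· + 1) = ((0 :: g k).map (· + 1)) from by simp,
        f_map_succ]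
      have hstep : f (0 :: g k) = g (k + 1) := ih k (by omega) hk1
      rw [hstep, g_cons (by omega : 2 ≤ m + 1), e3, e4]

/-- After `n` appends starting from the empty list, the U-MMB structure consists of
exactly `t n = ⌊log₂ (n+1)⌋` mountains, the one at position `i` (from the right)
having height `i + bit i (n+1)`. -/
theorem ummb_height_sequence (n : ℕ) :
    step^[n] [] =
      (List.range (Nat.log 2 (n + 1))).map (fun i => i + bit i (n + 1)) := by
  have : step^[n] [] = g (n + 1) := by
    induction n with
    | zero => simp [g, Nat.log_one_right]
    | succ n ih =>
      rw [Function.iterate_succ_apply', ih, step_g (n + 1) (by omega)]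
  rw [this]; rfl
end

section
/- For all natural numbers k, n with 1 ≤ k ≤ n, one has p(k,n) ≤ ⌊log₂ k⌋ and σ(k,n) ≤ ⌊log₂ k⌋ + 1. That is, the k-th most recently appended leaf of the U-MMB structure on n leaves sits in one of the ⌊log₂ k⌋ + 1 rightmost mountains, and its mountain has height at most ⌊log₂ k⌋ + 1. -/
/-- Position (from 0 at the right) of the mountain of the U-MMB structure on `n` leaves
containing the `k`-th most recently appended leaf. -/
noncomputable def pos (k n : ℕ) : ℕ := sInf {i : ℕ | k ≤ 2 ^ (i + 1) - 1 + (n + 1) % 2 ^ (i + 1)}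

/-- Height of the mountain of the U-MMB structure on `n` leaves containing the `k`-th
most recently appended leaf. -/
noncomputable def mheight (k n : ℕ) : ℕ := pos k n + bit (pos k n) (n + 1)

/-- The `k`-th most recent leaf of the U-MMB structure on `n` leaves sits in one of the
`⌊log₂ k⌋ + 1` rightmost mountains, and its mountain has height at most `⌊log₂ k⌋ + 1`. -/
theorem ummb_kth_leaf (k n : ℕ) (hk : 1 ≤ k) (hkn : k ≤ n) :
    pos k n ≤ Nat.log 2 k ∧ mheight k n ≤ Nat.log 2 k + 1 := by
  have hmem : Nat.log 2 k ∈ {i : ℕ | k ≤ 2 ^ (i + 1) - 1 + (n + 1) % 2 ^ (i + 1)} := by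
    have hlt : k < 2 ^ (Nat.log 2 k + 1) := Nat.lt_pow_succ_log_self (by norm_num) k
    have : k ≤ 2 ^ (Nat.log 2 k + 1) - 1 := Nat.le_sub_one_of_lt hlt
    exact le_trans this (Nat.le_add_right _ _)
  have hpos : pos k n ≤ Nat.log 2 k := Nat.sInf_le hmem
  refine ⟨hpos, ?_⟩
  have hbit : bit (pos k n) (n + 1) ≤ 1 := Nat.lt_succ_iff.mp (Nat.mod_lt _ (by norm_num))
  exact add_le_add hpos hbit
end

section
/- Let c > 0 be a real number, let i, m, k be natural numbers with 1 ≤ i ≤ m, and let m_0 < m_1 < ⋯ < m_t be natural numbers with m_0 = m, m_t ≤ m + k, and satisfying m_{j+1} > m_j + c·(m_j − i + 1) for every 0 ≤ j < t. Then (1+c)^t < k + 1; equivalently, t < log_{1+c}(k+1). (This is the arithmetic core of the fact that recent-proof compatibility implies low update frequency: a membership proof of the i-th item that is updated at list sizes m_0, …, m_t during a k-increment, under a recent-proof-compatibility guarantee with parameter c, can require at most log_{1+c}(k+1) updates.) -/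
/-- Arithmetic core of "recent-proof compatibility implies low update frequency":
if a membership proof of the `i`-th item is updated at list sizes
`ms 0 < ms 1 < ⋯ < ms t` during a `k`-increment, with `ms 0 = m`, `ms t ≤ m + k`, and
each forced update satisfies `ms (j+1) > ms j + c · (ms j − i + 1)`, then
`(1+c)^t < k + 1`, i.e. `t < log_{1+c} (k+1)`. -/
theorem recent_proof_low_update_freq (c : ℝ) (hc : 0 < c)
    (i m k t : ℕ) (hi : 1 ≤ i) (him : i ≤ m) (hk : 1 ≤ k)
    (ms : ℕ → ℕ) (h0 : ms 0 = m) (ht : ms t ≤ m + k)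
    (hmono : ∀ j, j < t → ms j < ms (j + 1))
    (hrec : ∀ j, j < t →
      (ms j : ℝ) + c * ((ms j : ℝ) - (i : ℝ) + 1) < (ms (j + 1) : ℝ)) :
    (1 + c) ^ t < (k : ℝ) + 1 := by
  have hA0 : (1:ℝ) ≤ (m:ℝ) - i + 1 := by
    have : (i:ℝ) ≤ (m:ℝ) := by exact_mod_cast him
    linarith
  have key : ∀ j, j ≤ t → (1 + c) ^ j * ((m:ℝ) - i + 1) ≤ (ms j : ℝ) - i + 1 := by
    intro j hj
    induction j with
    | zero => simp [h0]
    | succ n ih =>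
      have hn : n ≤ t := Nat.le_of_succ_le hj
      have ihn := ih hn
      have hr := hrec n (Nat.lt_of_succ_le hj)
      have hpow : (0:ℝ) < (1 + c) ^ n := pow_pos (by linarith) n
      have : (1 + c) * ((1 + c) ^ n * ((m:ℝ) - i + 1)) ≤ (1 + c) * ((ms n : ℝ) - i + 1) := by
        apply mul_le_mul_of_nonneg_left ihn (by linarith)
      calc (1 + c) ^ (n+1) * ((m:ℝ) - i + 1)
          = (1 + c) * ((1 + c) ^ n * ((m:ℝ) - i + 1)) := by ring
        _ ≤ (1 + c) * ((ms n : ℝ) - i + 1) := this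
        _ ≤ (ms (n+1) : ℝ) - i + 1 := by nlinarith
  have hup : (ms t : ℝ) ≤ (m:ℝ) + k := by exact_mod_cast ht
  rcases Nat.eq_zero_or_pos t with rfl | htpos
  · have : (1:ℝ) ≤ (k:ℝ) := by exact_mod_cast hk
    simpa using by linarith
  · obtain ⟨s, rfl⟩ := Nat.exists_eq_succ_of_ne_zero htpos.ne'
    have hks := key s (Nat.le_succ s)
    have hr := hrec s (Nat.lt_succ_self s)
    have hpow : (0:ℝ) < (1 + c) ^ s := pow_pos (by linarith) s
    have hstep : (1 + c) ^ (s+1) * ((m:ℝ) - i + 1) < (ms (s+1) : ℝ) - i + 1 := by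
      have h1 : (1 + c) * ((1 + c) ^ s * ((m:ℝ) - i + 1)) ≤ (1 + c) * ((ms s : ℝ) - i + 1) :=
        mul_le_mul_of_nonneg_left hks (by linarith)
      have h2 : (1 + c) ^ (s+1) * ((m:ℝ) - i + 1) = (1 + c) * ((1 + c) ^ s * ((m:ℝ) - i + 1)) := by
        ring
      rw [h2]; nlinarith
    have hAt : (ms (s+1) : ℝ) - i + 1 ≤ ((m:ℝ) - i + 1) + k := by linarith
    have hpow1 : (1:ℝ) ≤ (1 + c) ^ (s+1) := one_le_pow₀ (by linarith : (1:ℝ) ≤ 1 + c)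
    show (1 + c) ^ (s+1) < (k:ℝ) + 1
    nlinarith [mul_le_mul_of_nonneg_right (sub_nonneg.mpr hpow1) (by linarith : (0:ℝ) ≤ (m:ℝ) - i + 1 - 1)]
end

section
/- Fix an integer k ≥ 1 and let d' := ⌈log₂ k⌉. Then the amortized U-MMR membership-proof size of the k-th most recent item equals d' + 2k/2^{d'} − 1; that is, the sequence N ↦ (1/N)·Σ_{n=k}^{k+N−1} f(k,n) tends to d' + 2k/2^{d'} − 1 as N → ∞. -/
/-!
Since `k ≤ n % 2^(s+1)` is monotone in `s`, `ummrHeight k n` is the number of levels `s` with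
`n % 2^(s+1) < k`. Exchanging the order of summation, the total height over `N` consecutive
leaves becomes a sum over the levels `s < T = ⌈log₂ (k + N)⌉` of the number of leaves satisfying
a predicate of period `2^(s+1)` and density `min k 2^(s+1) / 2^(s+1)`; each such count is within
`k` of `N` times the density. The densities are `1` for `s + 1 < d'` and `k / 2^(s+1)` from then
on, so they sum to `d' + 2k/2^d' - 1 - k/2^T`. The total error `k (T + 1)` is `o(N)`.
-/

open Filter

/-- Height of the mountain of the U-MMR structure on `n` leaves containing the `k`-th
most recently appended leaf: the least `s ≥ 0` such that `n mod 2^(s+1) ≥ k`. This is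
the size in hashes of that leaf's U-MMR membership proof. -/
noncomputable def ummrHeight (k n : ℕ) : ℕ := sInf {s : ℕ | k ≤ n % 2 ^ (s + 1)}

open Finset Function Asymptotics

section Periodic

variable {p : ℕ → Prop} [DecidablePred p] {m : ℕ}

theorem card_filter_Ico_mul_of_periodic (hp : Periodic p m) (a q : ℕ) :
    #{n ∈ Ico a (a + q * m) | p n} = q * Nat.count p m := by
  induction q with
  | zero => simp
  | succ q ih =>
    rw [card_filter, add_mul, one_mul, ← add_assoc,
      ← sum_Ico_consecutive _ (Nat.le_add_right a _) (Nat.le_add_right _ m), ← card_filter,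
      ← card_filter, ih, Nat.filter_Ico_card_eq_of_periodic _ _ p hp, add_mul, one_mul]

theorem abs_card_filter_Ico_sub_le (hp : Periodic p m) (hm : 0 < m) (a N : ℕ) :
    |(#{n ∈ Ico a (a + N) | p n} : ℝ) - N * Nat.count p m / m| ≤ Nat.count p m := by
  set q := N / m
  have hqN : q * m ≤ N := Nat.div_mul_le_self N m
  have hNq : N ≤ (q + 1) * m := by rw [add_mul, one_mul]; exact (Nat.lt_div_mul_add hm).le
  have hcard_mono {M M' : ℕ} (h : M ≤ M') :
      #{n ∈ Ico a (a + M) | p n} ≤ #{n ∈ Ico a (a + M') | p n} :=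
    card_le_card (filter_subset_filter _ (Ico_subset_Ico_right (by omega)))
  have hlow := card_filter_Ico_mul_of_periodic hp a q ▸ hcard_mono hqN
  have hupp := card_filter_Ico_mul_of_periodic hp a (q + 1) ▸ hcard_mono hNq
  have hm' : (0 : ℝ) < m := by exact_mod_cast hm
  have hc : (0 : ℝ) ≤ Nat.count p m := Nat.cast_nonneg _
  rify at hqN hNq hlow hupp
  have hmean_low : (q * Nat.count p m : ℝ) ≤ N * Nat.count p m / m := by
    rw [le_div_iff₀ hm', mul_right_comm]
    exact mul_le_mul_of_nonneg_right hqN hc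
  have hmean_upp : (N * Nat.count p m / m : ℝ) ≤ (q + 1) * Nat.count p m := by
    rw [div_le_iff₀ hm', mul_right_comm]
    exact mul_le_mul_of_nonneg_right hNq hc
  rw [abs_sub_le_iff]
  constructor <;> linarith

end Periodic

theorem count_mod_lt_self (k m : ℕ) : Nat.count (fun n => n % m < k) m = min k m := by
  rw [Nat.count_eq_card_filter_range, ← card_range (min k m)]
  congr 1
  ext n
  simp only [mem_filter, mem_range]
  constructor
  · rintro ⟨hn, hk⟩
    rw [Nat.mod_eq_of_lt hn] at hk
    omega
  · intro hn
    rw [Nat.mod_eq_of_lt (by omega)]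
    omega

theorem periodic_mod_lt (k m : ℕ) : Periodic (fun n => n % m < k) m := fun n => by
  simp only [Nat.add_mod_right]

theorem Nat.sInf_eq_card_filter_not {P : ℕ → Prop} [DecidablePred P] (hP : Monotone P) {T : ℕ}
    (hT : P T) : sInf {s | P s} = #{s ∈ range T | ¬P s} := by
  rw [← card_range (sInf {s | P s})]
  congr 1
  ext s
  simp only [mem_filter, mem_range]
  constructor
  · intro hs
    exact ⟨hs.trans_le (Nat.sInf_le hT), Nat.notMem_of_lt_sInf hs⟩
  · rintro ⟨-, hs⟩
    by_contra! h
    exact hs (hP h (Nat.sInf_mem ⟨T, hT⟩))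

theorem monotone_le_mod_two_pow (k n : ℕ) : Monotone fun s => k ≤ n % 2 ^ (s + 1) :=
  monotone_nat_of_le_succ fun _ hs =>
    hs.trans <| (Nat.mod_mod_of_dvd n (pow_dvd_pow 2 (Nat.le_succ _))).symm.trans_le
      (Nat.mod_le _ _)

theorem ummrHeight_eq_card_filter {k n T : ℕ} (hkn : k ≤ n) (hnT : n < 2 ^ T) :
    ummrHeight k n = #{s ∈ range T | n % 2 ^ (s + 1) < k} := by
  have hT : k ≤ n % 2 ^ (T + 1) := by
    rwa [Nat.mod_eq_of_lt (hnT.trans (Nat.pow_lt_pow_succ one_lt_two))]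
  simp only [ummrHeight, Nat.sInf_eq_card_filter_not (monotone_le_mod_two_pow k n) hT, not_le]

theorem sum_ummrHeight_Ico {k N T : ℕ} (hT : k + N ≤ 2 ^ T) :
    ∑ n ∈ Ico k (k + N), ummrHeight k n
      = ∑ s ∈ range T, #{n ∈ Ico k (k + N) | n % 2 ^ (s + 1) < k} := by
  rw [sum_congr rfl fun _ hn => ummrHeight_eq_card_filter (mem_Ico.1 hn).1
    ((mem_Ico.1 hn).2.trans_le hT)]
  simp only [card_filter]
  exact sum_comm

theorem sum_range_min_div_two_pow {k T : ℕ} (hk : 1 ≤ k) (hT : Nat.clog 2 k ≤ T) :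
    ∑ s ∈ range T, ((min k (2 ^ (s + 1)) : ℕ) : ℝ) / 2 ^ (s + 1)
      = Nat.clog 2 k + 2 * k / 2 ^ Nat.clog 2 k - 1 - k / 2 ^ T := by
  induction T, hT using Nat.le_induction with
  | base =>
    obtain rfl | hk := hk.eq_or_lt
    · norm_num
    obtain ⟨d, hd⟩ : ∃ d, Nat.clog 2 k = d + 1 :=
      Nat.exists_eq_add_one_of_ne_zero (Nat.clog_pos one_lt_two hk).ne'
    have hlow : 2 ^ d < k := by simpa [hd] using Nat.pow_pred_clog_lt_self one_lt_two hk
    have hupp : k ≤ 2 ^ (d + 1) := hd ▸ Nat.le_pow_clog one_lt_two k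
    have hfull : ∀ s ∈ range d, ((min k (2 ^ (s + 1)) : ℕ) : ℝ) / 2 ^ (s + 1) = 1 := by
      intro s hs
      have : 2 ^ (s + 1) ≤ 2 ^ d := Nat.pow_le_pow_right two_pos (mem_range.1 hs)
      rw [min_eq_right (by omega), Nat.cast_pow, Nat.cast_ofNat, div_self (by positivity)]
    rw [hd, sum_range_succ, sum_congr rfl hfull, sum_const, card_range, min_eq_left hupp]
    push_cast
    field_simp
    ring
  | succ T hT ih =>
    have hkT : k ≤ 2 ^ (T + 1) :=
      (Nat.le_pow_clog one_lt_two k).trans (Nat.pow_le_pow_right two_pos (by omega))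
    rw [sum_range_succ, ih, min_eq_left hkT]
    field_simp
    ring

theorem abs_sum_ummrHeight_sub_le {k : ℕ} (hk : 1 ≤ k) (N : ℕ) :
    |∑ n ∈ Ico k (k + N), (ummrHeight k n : ℝ)
        - N * (Nat.clog 2 k + 2 * k / 2 ^ Nat.clog 2 k - 1)|
      ≤ k * (Nat.clog 2 (k + N) + 1) := by
  set T := Nat.clog 2 (k + N)
  have hT : k + N ≤ 2 ^ T := Nat.le_pow_clog one_lt_two _
  have hdensity :=
    sum_range_min_div_two_pow (T := T) hk (Nat.clog_mono_right 2 (Nat.le_add_right k N))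
  have herr (s : ℕ) :
      |(#{n ∈ Ico k (k + N) | n % 2 ^ (s + 1) < k} : ℝ)
        - N * ((min k (2 ^ (s + 1)) : ℕ) : ℝ) / 2 ^ (s + 1)| ≤ k := by
    have := abs_card_filter_Ico_sub_le (periodic_mod_lt k (2 ^ (s + 1))) (by positivity) k N
    rw [count_mod_lt_self, Nat.cast_pow, Nat.cast_ofNat] at this
    exact this.trans (Nat.cast_le.2 (min_le_left _ _))
  have htail : N * (k / 2 ^ T : ℝ) ≤ k := by
    rw [mul_div_assoc', div_le_iff₀ (by positivity), mul_comm]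
    gcongr
    exact_mod_cast (Nat.le_add_left N k).trans hT
  calc _ = |∑ s ∈ range T, ((#{n ∈ Ico k (k + N) | n % 2 ^ (s + 1) < k} : ℝ)
              - N * ((min k (2 ^ (s + 1)) : ℕ) : ℝ) / 2 ^ (s + 1)) - N * (k / 2 ^ T)| := by
        rw [← Nat.cast_sum, sum_ummrHeight_Ico hT, Nat.cast_sum, sum_sub_distrib]
        simp only [mul_div_assoc, ← mul_sum, hdensity]
        ring_nf
    _ ≤ ∑ s ∈ range T, |(#{n ∈ Ico k (k + N) | n % 2 ^ (s + 1) < k} : ℝ)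
              - N * ((min k (2 ^ (s + 1)) : ℕ) : ℝ) / 2 ^ (s + 1)| + N * (k / 2 ^ T) := by
        refine (abs_sub _ _).trans (add_le_add (abs_sum_le_sum_abs _ _) (abs_of_nonneg ?_).le)
        positivity
    _ ≤ ∑ _s ∈ range T, (k : ℝ) + k := add_le_add (sum_le_sum fun s _ => herr s) htail
    _ = k * (T + 1) := by rw [sum_const, card_range, nsmul_eq_mul]; ring

theorem isLittleO_clog_add_atTop {b : ℕ} (hb : 1 < b) (k : ℕ) :
    (fun N : ℕ => (Nat.clog b (k + N) : ℝ)) =o[atTop] (fun N : ℕ => (N : ℝ)) := by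
  have hb' : (1 : ℝ) < b := by exact_mod_cast hb
  have hshift : Tendsto (fun N : ℕ => ((k + N : ℕ) : ℝ)) atTop atTop :=
    tendsto_natCast_atTop_atTop.comp (tendsto_atTop_mono (Nat.le_add_left · k) tendsto_id)
  have hlogb : (fun N : ℕ => Real.logb b (k + N : ℕ) + 1) =o[atTop]
      (fun N : ℕ => ((k + N : ℕ) : ℝ)) :=
    (Real.isLittleO_logb_id_atTop.add (isLittleO_const_id_atTop 1)).comp_tendsto hshift
  have hclog : (fun N : ℕ => (Nat.clog b (k + N) : ℝ)) =O[atTop]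
      (fun N : ℕ => Real.logb b (k + N : ℕ) + 1) := by
    refine IsBigO.of_bound 1 (eventually_atTop.2 ⟨1, fun N hN => ?_⟩)
    have hlog_nonneg : 0 ≤ Real.logb b (k + N : ℕ) :=
      Real.logb_nonneg hb' (by exact_mod_cast Nat.le_add_left_of_le hN)
    rw [← Real.natCeil_logb_natCast, one_mul, Real.norm_natCast,
      Real.norm_of_nonneg (by positivity)]
    exact (Nat.ceil_lt_add_one hlog_nonneg).le
  have hlin : (fun N : ℕ => ((k + N : ℕ) : ℝ)) =O[atTop] (fun N : ℕ => (N : ℝ)) := by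
    refine IsBigO.of_bound 2 (eventually_atTop.2 ⟨k, fun N hN => ?_⟩)
    simp only [Real.norm_natCast]
    push_cast
    linarith [(Nat.cast_le (α := ℝ)).2 hN]
  exact hclog.trans_isLittleO (hlogb.trans_isBigO hlin)

/-- The amortized U-MMR membership-proof size of the `k`-th most recent item equals
`d' + 2k/2^d' − 1`, where `d' = ⌈log₂ k⌉`. -/
theorem ummr_amortized_proof_size (k : ℕ) (hk : 1 ≤ k) :
    Tendsto
      (fun N : ℕ => (N : ℝ)⁻¹ * ∑ n ∈ Finset.Ico k (k + N), (ummrHeight k n : ℝ))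
      atTop
      (nhds ((Nat.clog 2 k : ℝ) + 2 * (k : ℝ) / 2 ^ (Nat.clog 2 k) - 1)) := by
  set L : ℝ := Nat.clog 2 k + 2 * k / 2 ^ Nat.clog 2 k - 1
  have herr :
      (fun N : ℕ => (k : ℝ) * (Nat.clog 2 (k + N) + 1)) =o[atTop] (fun N : ℕ => (N : ℝ)) :=
    ((isLittleO_clog_add_atTop one_lt_two k).add
      ((isLittleO_one_left_iff ℝ).2 (by simpa using tendsto_natCast_atTop_atTop))).const_mul_left k
  rw [tendsto_iff_norm_sub_tendsto_zero]
  refine squeeze_zero' (Eventually.of_forall fun _ => norm_nonneg _) ?_ herr.tendsto_div_nhds_zero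
  filter_upwards [eventually_gt_atTop 0] with N hN
  have hN : (0 : ℝ) < N := by exact_mod_cast hN
  calc ‖(N : ℝ)⁻¹ * ∑ n ∈ Ico k (k + N), (ummrHeight k n : ℝ) - L‖
      = |∑ n ∈ Ico k (k + N), (ummrHeight k n : ℝ) - N * L| / N := by
        rw [Real.norm_eq_abs, ← abs_of_pos hN, ← abs_div, abs_of_pos hN]
        congr 1
        field_simp
    _ ≤ k * (Nat.clog 2 (k + N) + 1) / N := by gcongr; exact abs_sum_ummrHeight_sub_le hk N
end

section
/- Fix an integer k ≥ 1 and let d := ⌊log₂(k+1)⌋. Then the amortized U-MMB membership-proof size of the k-th most recent item, i.e., the limit as N → ∞ of (1/N)·Σ_{n=k}^{k+N−1} σ(k,n), equals d + 3(k+1)/2^{d+1} − 2 if 2^d ≤ k+1 < (3/2)·2^d, and equals d + (k+1)/2^{d+1} − 1/2 if (3/2)·2^d ≤ k+1 < 2^{d+1}. -/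
/-!
Write `k + 1 = 2 ^ d + a` with `a < 2 ^ d`. The `k`-th most recent leaf lies in mountain `d - 1`
or `d` according as the low `d` bits of `n + 1` are at least `a`, so its proof size depends only
on `(n + 1) mod 2 ^ (d + 1)`. The Cesàro mean of a periodic sequence is its average over one
period, and pairing the residues `s` and `2 ^ d + s` reduces that average to counting the
`s < 2 ^ d` below `a` and above `max a 2 ^ (d - 1)`.
-/

open Filter

open Finset
open scoped Topology

namespace Function.Periodic

variable {P : ℕ}

theorem sum_range_shift {M : Type*} [AddCommMonoid M] {f : ℕ → M} (hf : Periodic f P)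
    (a : ℕ) : ∑ n ∈ range P, f (a + n) = ∑ n ∈ range P, f n := by
  induction a with
  | zero => simp
  | succ a ih =>
    rw [← ih]
    rcases P with _ | Q
    · simp
    · have hwrap : f (a + Q + 1) = f a := by rw [add_assoc]; exact hf a
      simp only [add_right_comm a 1]
      rw [sum_range_succ_comm, hwrap, sum_range_succ' (fun n => f (a + n)), add_zero, add_comm]
      simp only [add_assoc]

theorem tendsto_inv_mul_sum_Ico {f : ℕ → ℝ} (hf : Periodic f P) (hP : 0 < P) (k : ℕ) :
    Tendsto (fun N : ℕ => (N : ℝ)⁻¹ * ∑ n ∈ Ico k (k + N), f n) atTop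
      (𝓝 ((∑ n ∈ range P, f n) / P)) := by
  set S := ∑ n ∈ range P, f n
  set A : ℕ → ℝ := fun N => ∑ n ∈ Ico k (k + N), f n
  have hA (N : ℕ) : A (N + P) = A N + S := by
    simp only [A, S]
    rw [← sum_Ico_consecutive f (n := k + N) (by omega) (by omega),
      sum_Ico_eq_sum_range f (k + N),
      show k + (N + P) - (k + N) = P by omega, hf.sum_range_shift]
  set e : ℕ → ℝ := fun N => A N - N * (S / P)
  have he : Periodic e P := fun N => by
    have : (P : ℝ) ≠ 0 := by positivity
    simp only [e, hA]
    push_cast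
    field_simp
    ring
  have he_bdd : IsBoundedUnder (· ≤ ·) atTop (norm ∘ e) :=
    isBoundedUnder_of ⟨∑ j ∈ range P, ‖e j‖, fun N => by
      rw [Function.comp_apply, ← he.map_mod_nat N]
      exact single_le_sum (f := fun j => ‖e j‖) (fun _ _ => norm_nonneg _)
        (mem_range.2 (Nat.mod_lt N hP))⟩
  have hlim : Tendsto (fun N : ℕ => S / P + (N : ℝ)⁻¹ * e N) atTop (𝓝 (S / P + 0)) :=
    tendsto_const_nhds.add (tendsto_inv_atTop_nhds_zero_nat.zero_mul_isBoundedUnder_le he_bdd)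
  rw [add_zero] at hlim
  refine hlim.congr' ((eventually_ne_atTop 0).mono fun N hN => ?_)
  have : (N : ℝ) ≠ 0 := by exact_mod_cast hN
  simp only [e]
  field_simp
  ring

end Function.Periodic

theorem bit_add_two_pow {i e : ℕ} (h : i < e) (m : ℕ) : bit i (m + 2 ^ e) = bit i m := by
  obtain ⟨t, rfl⟩ := Nat.exists_eq_add_of_lt h
  rw [bit, bit, show 2 ^ (i + t + 1) = 2 ^ i * (2 * 2 ^ t) by ring,
    Nat.add_mul_div_left _ _ (by positivity), Nat.add_mul_mod_self_left]

theorem bit_eq_ite_of_lt_two_pow_succ {i m : ℕ} (h : m < 2 ^ (i + 1)) :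
    bit i m = if 2 ^ i ≤ m then 1 else 0 := by
  have hq : m / 2 ^ i < 2 := Nat.div_lt_of_lt_mul (by rwa [← pow_succ])
  rw [bit, Nat.mod_eq_of_lt hq]
  split_ifs with him
  · have := (Nat.one_le_div_iff (by positivity)).2 him
    omega
  · exact Nat.div_eq_of_lt (not_le.1 him)

section Mountain

variable {k c a : ℕ}

theorem pos_eq (hk : k + 1 = 2 ^ (c + 1) + a) (ha : a < 2 ^ (c + 1)) (n : ℕ) :
    pos k n = if a ≤ (n + 1) % 2 ^ (c + 1) then c else c + 1 := by
  have hmod (i : ℕ) : (n + 1) % 2 ^ i < 2 ^ i := Nat.mod_lt _ (by positivity)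
  have hpow (i : ℕ) : 2 ^ (i + 1) = 2 * 2 ^ i := pow_succ' 2 i
  have mem_top : k ≤ 2 ^ (c + 1 + 1) - 1 + (n + 1) % 2 ^ (c + 1 + 1) := by
    have := hpow (c + 1)
    omega
  have not_mem_below : ∀ j < c, ¬ k ≤ 2 ^ (j + 1) - 1 + (n + 1) % 2 ^ (j + 1) := by
    intro j hj
    have : 2 ^ (j + 1 + 1) ≤ 2 ^ (c + 1) := Nat.pow_le_pow_right two_pos (by omega)
    have := hmod (j + 1)
    have := hpow (j + 1)
    omega
  have least_of {i : ℕ} (hi : k ≤ 2 ^ (i + 1) - 1 + (n + 1) % 2 ^ (i + 1))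
      (below : ∀ j < i, ¬ k ≤ 2 ^ (j + 1) - 1 + (n + 1) % 2 ^ (j + 1)) : pos k n = i :=
    IsLeast.csInf_eq ⟨hi, fun j hj => not_lt.1 fun hji => below j hji hj⟩
  split_ifs with h
  · exact least_of (by omega) not_mem_below
  · refine least_of mem_top fun j hj => ?_
    rcases (Nat.lt_succ_iff.1 hj).lt_or_eq with hj | rfl
    · exact not_mem_below j hj
    · omega

/-- The proof size `mheight k n` as a function of `m = n + 1`, for `k + 1 = 2 ^ (c + 1) + a`
with `a < 2 ^ (c + 1)`. -/
def mheightProfile (c a m : ℕ) : ℕ :=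
  if a ≤ m % 2 ^ (c + 1) then c + bit c m else c + 1 + bit (c + 1) m

theorem mheight_eq (hk : k + 1 = 2 ^ (c + 1) + a) (ha : a < 2 ^ (c + 1)) (n : ℕ) :
    mheight k n = mheightProfile c a (n + 1) := by
  rw [mheight, pos_eq hk ha, mheightProfile]
  split_ifs <;> rfl

theorem mheightProfile_periodic (c a : ℕ) :
    Function.Periodic (mheightProfile c a) (2 ^ (c + 2)) := fun m => by
  have hmod : (m + 2 ^ (c + 2)) % 2 ^ (c + 1) = m % 2 ^ (c + 1) := by
    rw [pow_succ, Nat.add_mul_mod_self_left]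
  rw [mheightProfile, mheightProfile, hmod, bit_add_two_pow (by omega),
    bit_add_two_pow (by omega)]

theorem mheightProfile_add_mheightProfile {s : ℕ} (hs : s < 2 ^ (c + 1)) :
    mheightProfile c a s + mheightProfile c a (2 ^ (c + 1) + s) =
      2 * c + 3 * (if s < a then 1 else 0) + 2 * (if max a (2 ^ c) ≤ s then 1 else 0) := by
  have hpow : 2 ^ (c + 1 + 1) = 2 * 2 ^ (c + 1) := pow_succ' 2 _
  have hmod : (2 ^ (c + 1) + s) % 2 ^ (c + 1) = s := by
    rw [Nat.add_mod_left, Nat.mod_eq_of_lt hs]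
  rw [mheightProfile, mheightProfile, Nat.mod_eq_of_lt hs, hmod, add_comm _ s,
    bit_add_two_pow (lt_add_one c), bit_eq_ite_of_lt_two_pow_succ hs,
    bit_eq_ite_of_lt_two_pow_succ (by omega : s < 2 ^ (c + 1 + 1)),
    bit_eq_ite_of_lt_two_pow_succ (by omega : s + 2 ^ (c + 1) < 2 ^ (c + 1 + 1))]
  split_ifs <;> omega

theorem sum_range_mheightProfile (ha : a < 2 ^ (c + 1)) :
    ∑ m ∈ range (2 ^ (c + 2)), mheightProfile c a m + 2 * max a (2 ^ c) =
      2 ^ (c + 2) * c + 3 * a + 2 ^ (c + 2) := by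
  have hpow : 2 ^ (c + 2) = 2 ^ (c + 1) + 2 ^ (c + 1) := by ring
  rw [hpow, sum_range_add, ← sum_add_distrib,
    sum_congr rfl fun s hs => mheightProfile_add_mheightProfile (mem_range.1 hs),
    sum_add_distrib, sum_add_distrib]
  simp only [← mul_sum, sum_boole, sum_const, range_eq_Ico, Ico_filter_lt, Ico_filter_le,
    Nat.card_Ico, Nat.sub_zero, add_mul, min_eq_right ha.le, max_eq_right (Nat.zero_le _),
    smul_eq_mul, Nat.cast_id]
  omega

theorem tendsto_average_mheight (hk : k + 1 = 2 ^ (c + 1) + a) (ha : a < 2 ^ (c + 1)) :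
    Tendsto (fun N : ℕ => (N : ℝ)⁻¹ * ∑ n ∈ Ico k (k + N), (mheight k n : ℝ)) atTop
      (𝓝 ((2 ^ (c + 2) * (c + 1) + 3 * a - 2 * max (a : ℝ) (2 ^ c)) / 2 ^ (c + 2))) := by
  have hprofile : Function.Periodic (fun m => (mheightProfile c a m : ℝ)) (2 ^ (c + 2)) :=
    (mheightProfile_periodic c a).comp _
  have hsum : ∑ m ∈ range (2 ^ (c + 2)), (mheightProfile c a m : ℝ) =
      2 ^ (c + 2) * (c + 1) + 3 * a - 2 * max (a : ℝ) (2 ^ c) := by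
    have := congrArg (Nat.cast : ℕ → ℝ) (sum_range_mheightProfile (c := c) ha)
    push_cast at this
    linarith
  simp_rw [mheight_eq hk ha]
  convert (hprofile.add_const 1).tendsto_inv_mul_sum_Ico (by positivity) k using 2
  rw [Nat.cast_pow, Nat.cast_ofNat, ← hsum, ← hprofile.sum_range_shift 1]
  simp only [Nat.add_comm 1]

end Mountain

/-- The amortized U-MMB membership-proof size of the `k`-th most recent item, with
`d = ⌊log₂ (k+1)⌋`, equals `d + 3(k+1)/2^(d+1) − 2` when `2^d ≤ k+1 < (3/2)·2^d`, and
`d + (k+1)/2^(d+1) − 1/2` when `(3/2)·2^d ≤ k+1 < 2^(d+1)`. -/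
theorem ummb_amortized_proof_size (k : ℕ) (hk : 1 ≤ k) (d : ℕ)
    (hd : d = Nat.log 2 (k + 1)) :
    (2 ^ d ≤ k + 1 → 2 * (k + 1) < 3 * 2 ^ d →
      Tendsto
        (fun N : ℕ => (N : ℝ)⁻¹ * ∑ n ∈ Finset.Ico k (k + N), (mheight k n : ℝ))
        atTop
        (nhds ((d : ℝ) + 3 * ((k : ℝ) + 1) / 2 ^ (d + 1) - 2))) ∧
    (3 * 2 ^ d ≤ 2 * (k + 1) → k + 1 < 2 ^ (d + 1) →
      Tendsto
        (fun N : ℕ => (N : ℝ)⁻¹ * ∑ n ∈ Finset.Ico k (k + N), (mheight k n : ℝ))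
        atTop
        (nhds ((d : ℝ) + ((k : ℝ) + 1) / 2 ^ (d + 1) - 1 / 2))) := by
  obtain ⟨c, rfl⟩ : ∃ c, d = c + 1 :=
    ⟨d - 1, by have := hd ▸ Nat.le_log_of_pow_le one_lt_two (by omega : 2 ^ 1 ≤ k + 1); omega⟩
  have hlow : 2 ^ (c + 1) ≤ k + 1 := hd ▸ Nat.pow_log_le_self 2 (by omega)
  have hhigh : k + 1 < 2 ^ (c + 1 + 1) := hd ▸ Nat.lt_pow_succ_log_self one_lt_two _
  have hpow : 2 ^ (c + 1) = 2 * 2 ^ c := pow_succ' 2 c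
  have hpow' : 2 ^ (c + 1 + 1) = 2 * 2 ^ (c + 1) := pow_succ' 2 _
  obtain ⟨a, hka⟩ := Nat.exists_eq_add_of_le hlow
  have hlim := tendsto_average_mheight hka (by omega)
  have hkaR : (k : ℝ) + 1 = 2 ^ (c + 1) + a := by exact_mod_cast hka
  refine ⟨fun _ hsmall => ?_, fun hlarge _ => ?_⟩
  · rw [max_eq_right (by exact_mod_cast (by omega : a ≤ 2 ^ c))] at hlim
    convert hlim using 2
    rw [hkaR]
    push_cast
    field_simp
    ring
  · rw [max_eq_left (by exact_mod_cast (by omega : 2 ^ c ≤ a))] at hlim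
    convert hlim using 2
    rw [hkaR]
    push_cast
    field_simp
    ring
end

section
/- For every integer k ≥ 1, let d' := ⌈log₂ k⌉, d := ⌊log₂(k+1)⌋, A(k) := d' + 2k/2^{d'} − 1 (the amortized U-MMR proof size of the k-th newest item), and B(k) := d + 3(k+1)/2^{d+1} − 2 if 2^d ≤ k+1 < (3/2)·2^d, and B(k) := d + (k+1)/2^{d+1} − 1/2 if (3/2)·2^d ≤ k+1 < 2^{d+1} (the amortized U-MMB proof size of the k-th newest item). Then A(k) − B(k) ≥ 5/4 − 3/(2(k+1)). -/
/-- The amortized U-MMR proof size `A k` of the `k`-th newest item exceeds the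
amortized U-MMB proof size `B k` by at least `5/4 − 3/(2(k+1))`, where, with
`d' = ⌈log₂ k⌉` and `d = ⌊log₂ (k+1)⌋`, `A k = d' + 2k/2^d' − 1` and
`B k = d + 3(k+1)/2^(d+1) − 2` if `k+1 < (3/2)·2^d`, else
`B k = d + (k+1)/2^(d+1) − 1/2`. -/
theorem ummr_vs_ummb_amortized (k : ℕ) (hk : 1 ≤ k)
    (d' d : ℕ) (hd' : d' = Nat.clog 2 k) (hd : d = Nat.log 2 (k + 1))
    (A B : ℝ)
    (hA : A = (d' : ℝ) + 2 * (k : ℝ) / 2 ^ d' - 1)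
    (hB : B = if 2 * (k + 1) < 3 * 2 ^ d
      then (d : ℝ) + 3 * ((k : ℝ) + 1) / 2 ^ (d + 1) - 2
      else (d : ℝ) + ((k : ℝ) + 1) / 2 ^ (d + 1) - 1 / 2) :
    A - B ≥ 5 / 4 - 3 / (2 * ((k : ℝ) + 1)) := by
  rcases eq_or_lt_of_le hk with h1 | hk2
  · -- k = 1
    obtain rfl : k = 1 := h1.symm
    rw [Nat.clog_one_right] at hd'
    have e2 : Nat.log 2 2 = 1 := by
      rw [Nat.log_eq_iff] <;> norm_num
    rw [e2] at hd
    subst hd hd' hA hB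
    norm_num
  · -- k ≥ 2
    have hklog : 2 ^ d ≤ k + 1 := hd ▸ Nat.pow_log_le_self 2 (by omega)
    have hklog2 : k + 1 < 2 ^ (d + 1) := by
      rw [hd]; exact Nat.lt_pow_succ_log_self (by norm_num) (k + 1)
    have hclog1 : k ≤ 2 ^ d' := hd' ▸ Nat.le_pow_clog (by norm_num) k
    have hclog2 : 2 ^ (d' - 1) < k := hd' ▸ Nat.pow_pred_clog_lt_self (by norm_num) hk2
    have hd'pos : 1 ≤ d' := by
      rcases Nat.eq_zero_or_pos d' with h | h
      · rw [h] at hclog1; simp at hclog1; omega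
      · exact h
    have hdle : d ≤ d' := by
      by_contra h
      push_neg at h
      have h1 : 2 ^ (d' + 1) ≤ 2 ^ d := Nat.pow_le_pow_right (by norm_num) h
      have h2 : 2 ^ 1 ≤ 2 ^ d' := Nat.pow_le_pow_right (by norm_num) hd'pos
      rw [pow_succ] at h1
      simp at h2
      omega
    have hdle2 : d' ≤ d + 1 := by
      by_contra h
      push_neg at h
      have h1 : 2 ^ (d + 1) ≤ 2 ^ (d' - 1) := Nat.pow_le_pow_right (by norm_num) (by omega)
      omega
    have hNle : (2:ℝ) ^ d ≤ (k:ℝ) + 1 := by exact_mod_cast hklog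
    have htle : (k:ℝ) + 1 ≤ 2 * 2 ^ d - 1 := by
      have h1 : k + 2 ≤ 2 ^ (d + 1) := hklog2
      have h2 := (Nat.cast_le (α := ℝ)).2 h1
      push_cast [pow_succ] at h2
      linarith
    have hNpos : (0:ℝ) < 2 ^ d := by positivity
    have htpos : (0:ℝ) < (k:ℝ) + 1 := by positivity
    have hkr : (2:ℝ) ≤ (k:ℝ) := by exact_mod_cast hk2
    rcases (by omega : d = d' ∨ d' = d + 1) with h | h
    · -- d' = d
      subst h
      have hkre : (k:ℝ) ≤ 2 ^ d := by exact_mod_cast hclog1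
      by_cases hc : 2 * (k + 1) < 3 * 2 ^ d
      · rw [if_pos hc] at hB
        subst hA hB
        rw [ge_iff_le, ← sub_nonneg]
        have key : ((d:ℝ) + 2 * (k:ℝ) / 2 ^ d - 1) - ((d:ℝ) + 3 * ((k:ℝ) + 1) / 2 ^ (d + 1) - 2)
            - (5 / 4 - 3 / (2 * ((k:ℝ) + 1)))
            = (2 * ((k:ℝ)+1)^2 - 8 * ((k:ℝ)+1) + 6 * 2^d - 2^d * ((k:ℝ)+1))
              / (4 * 2^d * ((k:ℝ)+1)) := by
          field_simp
          ring
        rw [key]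
        apply div_nonneg _ (by positivity)
        have hcr : 2 * ((k:ℝ) + 1) < 3 * 2 ^ d := by exact_mod_cast hc
        rcases (by omega : k = 2 ^ d ∨ k + 1 = 2 ^ d) with he | he
        · have her : (k:ℝ) = 2 ^ d := by exact_mod_cast he
          nlinarith
        · have her : (k:ℝ) + 1 = 2 ^ d := by exact_mod_cast he
          nlinarith
      · rw [if_neg hc] at hB
        push_neg at hc
        have h2d : (2:ℕ) ^ d = 2 := by omega
        have hk2' : k = 2 := by omega
        subst hk2'
        have hNr : (2:ℝ) ^ d = 2 := by exact_mod_cast h2d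
        rw [hA, hB, pow_succ, hNr]
        norm_num
        linarith
    · -- d' = d + 1
      subst h
      simp only [Nat.add_sub_cancel] at hclog2
      have hkre : (2:ℝ) ^ d < (k:ℝ) := by exact_mod_cast hclog2
      by_cases hc : 2 * (k + 1) < 3 * 2 ^ d
      · rw [if_pos hc] at hB
        subst hA hB
        rw [ge_iff_le, ← sub_nonneg]
        have key : (((d:ℕ) + 1 : ℕ) : ℝ) + 2 * (k:ℝ) / 2 ^ (d + 1) - 1
            - ((d:ℝ) + 3 * ((k:ℝ) + 1) / 2 ^ (d + 1) - 2)
            - (5 / 4 - 3 / (2 * ((k:ℝ) + 1)))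
            = ((3 * 2^d - 2 * ((k:ℝ)+1)) * (((k:ℝ)+1) + 2)) / (4 * 2^d * ((k:ℝ)+1)) := by
          push_cast
          field_simp
          ring
        rw [key]
        apply div_nonneg _ (by positivity)
        have hcr : 2 * ((k:ℝ) + 1) < 3 * 2 ^ d := by exact_mod_cast hc
        nlinarith
      · rw [if_neg hc] at hB
        push_neg at hc
        subst hA hB
        rw [ge_iff_le, ← sub_nonneg]
        have key : (((d:ℕ) + 1 : ℕ) : ℝ) + 2 * (k:ℝ) / 2 ^ (d + 1) - 1
            - ((d:ℝ) + ((k:ℝ) + 1) / 2 ^ (d + 1) - 1 / 2)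
            - (5 / 4 - 3 / (2 * ((k:ℝ) + 1)))
            = ((2 * ((k:ℝ)+1) - 3 * 2^d) * (((k:ℝ)+1) - 2)) / (4 * 2^d * ((k:ℝ)+1)) := by
          push_cast
          field_simp
          ring
        rw [key]
        apply div_nonneg _ (by positivity)
        have hcr : 3 * (2:ℝ) ^ d ≤ 2 * ((k:ℝ) + 1) := by exact_mod_cast hc
        nlinarith
end

section
/- Let k, n be natural numbers with 1 ≤ k < n, and let d := ⌊log₂(k+1)⌋. Then p(k,n) = d − 1 if k + 1 − 2^d ≤ (n+1) mod 2^d, and p(k,n) = d otherwise. That is, the mountain of the U-MMB structure on n leaves containing the k-th most recently appended leaf sits at position d−1 or d, according to whether k + 1 − 2^d ≤ (n+1) mod 2^d. -/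
lemma sInf_eq_of_mem_of_lt (S : Set ℕ) (m : ℕ) (h1 : m ∈ S) (h2 : ∀ j < m, j ∉ S) :
    sInf S = m := by
  refine le_antisymm (Nat.sInf_le h1) ?_
  by_contra h
  push_neg at h
  exact h2 _ h (Nat.sInf_mem ⟨m, h1⟩)

/-- With `d = ⌊log₂ (k+1)⌋`, the mountain of the U-MMB structure on `n` leaves
containing the `k`-th most recently appended leaf is at position `d − 1` if
`k + 1 − 2^d ≤ (n+1) mod 2^d`, and at position `d` otherwise. -/
theorem ummb_mountain_position (k n : ℕ) (hk : 1 ≤ k) (hkn : k < n)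
    (d : ℕ) (hd : d = Nat.log 2 (k + 1)) :
    (k + 1 - 2 ^ d ≤ (n + 1) % 2 ^ d → pos k n = d - 1) ∧
    (¬ (k + 1 - 2 ^ d ≤ (n + 1) % 2 ^ d) → pos k n = d) := by
  have hd1 : 1 ≤ d := hd ▸ Nat.log_pos (by norm_num) (by omega)
  have h2 : 2 ^ d ≤ k + 1 := hd ▸ Nat.pow_log_le_self 2 (by omega)
  have h3 : k + 1 < 2 ^ (d + 1) := hd ▸ Nat.lt_pow_succ_log_self (by norm_num) _
  have key : ∀ j, j + 1 < d → j ∉ {i : ℕ | k ≤ 2 ^ (i + 1) - 1 + (n + 1) % 2 ^ (i + 1)} := by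
    intro j hj
    simp only [Set.mem_setOf_eq, not_le]
    have hm : (n + 1) % 2 ^ (j + 1) < 2 ^ (j + 1) :=
      Nat.mod_lt _ (pow_pos (by norm_num) _)
    have hp : 2 ^ (j + 1 + 1) ≤ 2 ^ d := Nat.pow_le_pow_right (by norm_num) (by omega)
    have he : 2 ^ (j + 1 + 1) = 2 * 2 ^ (j + 1) := by ring
    omega
  constructor
  · intro h
    rw [pos]
    apply sInf_eq_of_mem_of_lt
    · show k ≤ 2 ^ (d - 1 + 1) - 1 + (n + 1) % 2 ^ (d - 1 + 1)
      have he : d - 1 + 1 = d := by omega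
      rw [he]
      omega
    · intro j hj
      exact key j (by omega)
  · intro h
    rw [pos]
    apply sInf_eq_of_mem_of_lt
    · show k ≤ 2 ^ (d + 1) - 1 + (n + 1) % 2 ^ (d + 1)
      omega
    · intro j hj
      rcases eq_or_lt_of_le (show j + 1 ≤ d by omega) with he | hlt
      · simp only [Set.mem_setOf_eq, not_le, he]
        omega
      · exact key j hlt
end

section
/- Let k, n be natural numbers with 1 ≤ k < n, and let d := ⌊log₂(k+1)⌋. Then p(k,n) ≠ p(k+1,n) if and only if n ≡ k (mod 2^d). That is, the k-th and (k+1)-th most recently appended leaves of the U-MMB structure on n leaves lie in different mountains exactly when n ≡ k (mod 2^d). -/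
/-!
`pos k n` is the least `i` with `k ≤ cumLeaves n i`, where `cumLeaves n i` counts the leaves in
the mountains at positions `0, …, i`. As `cumLeaves n` is monotone, `pos · n` is its lower
adjoint, so the leaves `k` and `k + 1` are separated exactly when `k` is a value of
`cumLeaves n`. Since `(n + 1) % 2 ^ (i + 1) < 2 ^ (i + 1)`, the value `cumLeaves n i = k` pins
`i + 1` down to `d = ⌊log₂ (k + 1)⌋`, and the resulting equation
`(n + 1) % 2 ^ d + 2 ^ d = k + 1` is the congruence `n ≡ k [MOD 2 ^ d]`.
-/

namespace UMMB

def cumLeaves (n i : ℕ) : ℕ :=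
  2 ^ (i + 1) - 1 + (n + 1) % 2 ^ (i + 1)

theorem cumLeaves_monotone (n : ℕ) : Monotone (cumLeaves n) := by
  refine monotone_nat_of_le_succ fun i => ?_
  have hmod : (n + 1) % 2 ^ (i + 1) < 2 ^ (i + 1) := Nat.mod_lt _ (Nat.two_pow_pos _)
  have hpow : 2 ^ (i + 1 + 1) = 2 * 2 ^ (i + 1) := by ring
  unfold cumLeaves
  omega

theorem le_cumLeaves_self (n k : ℕ) : k ≤ cumLeaves n k := by
  have h₁ : k < 2 ^ k := Nat.lt_two_pow_self
  have h₂ : 2 ^ k ≤ 2 ^ (k + 1) := Nat.pow_le_pow_right (by norm_num) (by omega)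
  unfold cumLeaves
  omega

theorem le_cumLeaves_pos (k n : ℕ) : k ≤ cumLeaves n (pos k n) :=
  Nat.sInf_mem (s := {i | k ≤ cumLeaves n i}) ⟨k, le_cumLeaves_self n k⟩

theorem pos_le_iff {k n i : ℕ} : pos k n ≤ i ↔ k ≤ cumLeaves n i :=
  ⟨fun h => (le_cumLeaves_pos k n).trans (cumLeaves_monotone n h), fun h => Nat.sInf_le h⟩

theorem pos_ne_pos_succ_iff (k n : ℕ) :
    pos k n ≠ pos (k + 1) n ↔ cumLeaves n (pos k n) = k := by
  have hle : pos k n ≤ pos (k + 1) n :=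
    pos_le_iff.2 ((Nat.le_succ k).trans (le_cumLeaves_pos (k + 1) n))
  have hsucc : pos (k + 1) n ≤ pos k n ↔ k + 1 ≤ cumLeaves n (pos k n) := pos_le_iff
  have := le_cumLeaves_pos k n
  omega

theorem cumLeaves_pos_eq_iff (k n : ℕ) :
    cumLeaves n (pos k n) = k ↔ k ∈ Set.range (cumLeaves n) := by
  refine ⟨fun h => ⟨_, h⟩, ?_⟩
  rintro ⟨i, rfl⟩
  exact le_antisymm (cumLeaves_monotone n (pos_le_iff.2 le_rfl)) (le_cumLeaves_pos _ n)

theorem cumLeaves_eq_iff {n i k : ℕ} :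
    cumLeaves n i = k ↔ (n + 1) % 2 ^ (i + 1) + 2 ^ (i + 1) = k + 1 := by
  have : 1 ≤ 2 ^ (i + 1) := Nat.one_le_two_pow
  unfold cumLeaves
  omega

theorem mem_range_cumLeaves_iff {k : ℕ} (n : ℕ) (hk : 1 ≤ k) :
    k ∈ Set.range (cumLeaves n) ↔
      (n + 1) % 2 ^ Nat.log 2 (k + 1) + 2 ^ Nat.log 2 (k + 1) = k + 1 := by
  set d := Nat.log 2 (k + 1)
  constructor
  · rintro ⟨i, hi⟩
    rw [cumLeaves_eq_iff] at hi
    have hmod : (n + 1) % 2 ^ (i + 1) < 2 ^ (i + 1) := Nat.mod_lt _ (Nat.two_pow_pos _)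
    have hpow : 2 ^ (i + 1 + 1) = 2 * 2 ^ (i + 1) := by ring
    have hid : i + 1 = d :=
      (Nat.log_eq_of_pow_le_of_lt_pow (by omega) (by omega)).symm
    rwa [hid] at hi
  · intro h
    have hd : d - 1 + 1 = d := by
      have : 1 ≤ d := Nat.le_log_of_pow_le (by norm_num) (by omega)
      omega
    exact ⟨d - 1, cumLeaves_eq_iff.2 (hd ▸ h)⟩

theorem mod_add_eq_iff_modEq {m n k : ℕ} (hm : m ≤ k + 1) (hk : k + 1 < 2 * m) :
    (n + 1) % m + m = k + 1 ↔ n ≡ k [MOD m] := by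
  have hkmod : (k + 1) % m = k + 1 - m := by
    rw [Nat.mod_eq_sub_mod hm, Nat.mod_eq_of_lt (by omega)]
  have hshift : n + 1 ≡ k + 1 [MOD m] ↔ n ≡ k [MOD m] :=
    ⟨Nat.ModEq.add_right_cancel' 1, Nat.ModEq.add_right 1⟩
  rw [← hshift, Nat.ModEq, hkmod]
  omega

end UMMB

open UMMB in
theorem ummb_different_mountains_general (k n : ℕ) (hk : 1 ≤ k)
    (d : ℕ) (hd : d = Nat.log 2 (k + 1)) :
    pos k n ≠ pos (k + 1) n ↔ n ≡ k [MOD 2 ^ d] := by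
  have hlo : 2 ^ d ≤ k + 1 := hd ▸ Nat.pow_log_le_self 2 (by omega)
  have hhi : k + 1 < 2 * 2 ^ d := by
    rw [← pow_succ']
    exact hd ▸ Nat.lt_pow_succ_log_self (by norm_num) (k + 1)
  rw [pos_ne_pos_succ_iff, cumLeaves_pos_eq_iff, mem_range_cumLeaves_iff n hk, ← hd]
  exact mod_add_eq_iff_modEq hlo hhi

/-- With `d = ⌊log₂ (k+1)⌋`, the `k`-th and `(k+1)`-th most recently appended leaves of
the U-MMB structure on `n` leaves lie in different mountains iff `n ≡ k (mod 2^d)`. -/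
theorem ummb_different_mountains (k n : ℕ) (hk : 1 ≤ k) (hkn : k < n)
    (d : ℕ) (hd : d = Nat.log 2 (k + 1)) :
    pos k n ≠ pos (k + 1) n ↔ n ≡ k [MOD 2 ^ d] :=
  ummb_different_mountains_general k n hk d hd
end

section
/- Let k, n be natural numbers with 1 ≤ k < n, let d := ⌊log₂(k+1)⌋, and assume n ≡ k (mod 2^d). Then: if 2^d ≤ k+1 < (3/2)·2^d, split(n,d) holds if and only if n ≡ k (mod 2^{d+1}); and if (3/2)·2^d ≤ k+1 < 2^{d+1}, split(n,d) holds if and only if n ≡ k (mod 2^{d+2}). That is, under the stated congruence there is a range split between the mountains containing the k-th and (k+1)-th newest leaves exactly under the finer congruence condition. -/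
/-- `Split n i` holds iff there is a range split between the mountains at positions `i`
and `i−1` of the MMB structure on `n` leaves. -/
def Split (n i : ℕ) : Prop :=
  bit i (n + 1) = 1 ∧ (bit (i + 1) (n + 1) = 0 ∨ bit (i - 1) (n + 1) = 0)

lemma bit_eq_mod_div (i m : ℕ) : bit i m = m % 2 ^ (i + 1) / 2 ^ i := by
  rw [pow_succ, Nat.mod_mul_right_div_self]; rfl

lemma mod_two_pow_succ (i m : ℕ) : m % 2 ^ (i + 1) = m % 2 ^ i + 2 ^ i * bit i m := by
  rw [pow_succ, Nat.mod_mul]; rfl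

lemma modEq_two_pow_succ_iff {a b i : ℕ} :
    a ≡ b [MOD 2 ^ (i + 1)] ↔ a ≡ b [MOD 2 ^ i] ∧ bit i a = bit i b := by
  constructor
  · intro h
    exact ⟨h.of_dvd (pow_dvd_pow 2 i.le_succ), by rw [bit_eq_mod_div, bit_eq_mod_div, h]⟩
  · rintro ⟨hlow, hbit⟩
    unfold Nat.ModEq
    rw [mod_two_pow_succ, mod_two_pow_succ, hlow, hbit]

lemma bit_eq_of_mul_le_of_lt {i m : ℕ} (q : ℕ) (hlo : q * 2 ^ i ≤ m)
    (hhi : m < (q + 1) * 2 ^ i) :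
    bit i m = q % 2 := by
  rw [bit, Nat.div_eq_of_lt_le hlo hhi]

section Split

variable {n i : ℕ}

lemma split_succ_iff_of_bit_eq_zero (h : bit i (n + 1) = 0) :
    Split n (i + 1) ↔ bit (i + 1) (n + 1) = 1 := by
  simp [Split, h]

lemma split_succ_iff_of_bit_eq_one (h : bit i (n + 1) = 1) :
    Split n (i + 1) ↔ bit (i + 1) (n + 1) = 1 ∧ bit (i + 2) (n + 1) = 0 := by
  simp [Split, h]

end Split

section Range

variable {n j e : ℕ}

lemma split_succ_iff_modEq_of_lt (hlo : 2 ^ (e + 1) ≤ j) (hhi : 2 * j < 3 * 2 ^ (e + 1))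
    (h : n + 1 ≡ j [MOD 2 ^ (e + 1)]) :
    Split n (e + 1) ↔ n + 1 ≡ j [MOD 2 ^ (e + 2)] := by
  rw [pow_succ] at hlo hhi
  have hj : bit (e + 1) j = 1 := bit_eq_of_mul_le_of_lt 1 (by omega) (by rw [pow_succ]; omega)
  have hj' : bit e j = 0 := bit_eq_of_mul_le_of_lt 2 (by omega) (by omega)
  rw [split_succ_iff_of_bit_eq_zero ((modEq_two_pow_succ_iff.mp h).2.trans hj'),
    modEq_two_pow_succ_iff, hj]
  exact (and_iff_right h).symm

lemma split_succ_iff_modEq_of_ge (hlo : 3 * 2 ^ (e + 1) ≤ 2 * j) (hhi : j < 2 ^ (e + 2))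
    (h : n + 1 ≡ j [MOD 2 ^ (e + 1)]) :
    Split n (e + 1) ↔ n + 1 ≡ j [MOD 2 ^ (e + 3)] := by
  rw [pow_succ, pow_succ] at hhi
  rw [pow_succ] at hlo
  have hj : bit (e + 1) j = 1 := bit_eq_of_mul_le_of_lt 1 (by rw [pow_succ]; omega)
    (by rw [pow_succ]; omega)
  have hj' : bit (e + 2) j = 0 := bit_eq_of_mul_le_of_lt 0 (by omega)
    (by rw [pow_succ, pow_succ]; omega)
  have hj'' : bit e j = 1 := bit_eq_of_mul_le_of_lt 3 (by omega) (by omega)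
  rw [split_succ_iff_of_bit_eq_one ((modEq_two_pow_succ_iff.mp h).2.trans hj''),
    modEq_two_pow_succ_iff, modEq_two_pow_succ_iff, hj, hj']
  exact ⟨fun hbits => ⟨⟨h, hbits.1⟩, hbits.2⟩, fun hall => ⟨hall.1.2, hall.2⟩⟩

end Range

theorem ummb_range_split_between_general (k n : ℕ) (hk : 1 ≤ k)
    (d : ℕ) (hd : d = Nat.log 2 (k + 1)) (hmod : n ≡ k [MOD 2 ^ d]) :
    (2 ^ d ≤ k + 1 → 2 * (k + 1) < 3 * 2 ^ d →
      (Split n d ↔ n ≡ k [MOD 2 ^ (d + 1)])) ∧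
    (3 * 2 ^ d ≤ 2 * (k + 1) → k + 1 < 2 ^ (d + 1) →
      (Split n d ↔ n ≡ k [MOD 2 ^ (d + 2)])) := by
  have hd_pos : 0 < d := hd ▸ Nat.log_pos one_lt_two (by omega)
  have hlo : 2 ^ d ≤ k + 1 := hd ▸ Nat.pow_log_le_self 2 (by omega)
  have hhi : k + 1 < 2 ^ (d + 1) := hd ▸ Nat.lt_pow_succ_log_self one_lt_two (k + 1)
  have shift (N : ℕ) : n + 1 ≡ k + 1 [MOD N] ↔ n ≡ k [MOD N] :=
    (Nat.ModEq.refl 1).add_iff_right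
  obtain ⟨e, rfl⟩ : ∃ e, d = e + 1 := ⟨d - 1, by omega⟩
  rw [← shift] at hmod
  refine ⟨fun _ hsmall => ?_, fun hlarge _ => ?_⟩
  · rw [← shift]
    exact split_succ_iff_modEq_of_lt hlo hsmall hmod
  · rw [← shift]
    exact split_succ_iff_modEq_of_ge hlarge hhi hmod

/-- With `d = ⌊log₂ (k+1)⌋` and `n ≡ k (mod 2^d)` (so that the `k`-th and `(k+1)`-th
newest leaves lie in different mountains): if `2^d ≤ k+1 < (3/2)·2^d`, there is a range
split between the two mountains iff `n ≡ k (mod 2^(d+1))`; and if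
`(3/2)·2^d ≤ k+1 < 2^(d+1)`, there is a range split iff `n ≡ k (mod 2^(d+2))`. -/
theorem ummb_range_split_between (k n : ℕ) (hk : 1 ≤ k) (hkn : k < n)
    (d : ℕ) (hd : d = Nat.log 2 (k + 1)) (hmod : n ≡ k [MOD 2 ^ d]) :
    (2 ^ d ≤ k + 1 → 2 * (k + 1) < 3 * 2 ^ d →
      (Split n d ↔ n ≡ k [MOD 2 ^ (d + 1)])) ∧
    (3 * 2 ^ d ≤ 2 * (k + 1) → k + 1 < 2 ^ (d + 1) →
      (Split n d ↔ n ≡ k [MOD 2 ^ (d + 2)])) :=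
  ummb_range_split_between_general k n hk d hd hmod
end

section
/- Define cost(n) := 1 if n+1 is a power of two, and cost(n) := ν₂(n+1) + 2 otherwise (the number of hash computations performed during the n-th F-MMB append). Then: (a) cost(n) ≤ ⌊log₂(n+1)⌋ + 1 for every n ≥ 1; and (b) the sequence N ↦ (1/N)·Σ_{n=1}^{N} cost(n) tends to 3 as N → ∞. -/
open Filter Classical

/-- The number of hash computations performed during the `n`-th F-MMB append:
`1` if `n+1` is a power of two (no merge step, one bagging node), and
`ν₂(n+1) + 2` otherwise. -/
noncomputable def cost (n : ℕ) : ℕ :=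
  if ∃ s : ℕ, n + 1 = 2 ^ s then 1 else padicValNat 2 (n + 1) + 2

/-!
Apart from the `O(log N)` indices with `n + 1` a power of two, `cost n = ν₂(n+1) + 2`.
By Legendre's formula `∑_{m ≤ N+1} ν₂(m) = ν₂((N+1)!) = N + 1 - s₂(N+1)`, where the binary
digit sum `s₂(N+1)` is at most `log₂(N+1) + 1`, so `∑_{n=1}^N cost n = 3N + O(log² N)`.
-/

lemma Nat.digits_sum_le_mul_log_add_one {b : ℕ} (hb : 1 < b) (m : ℕ) :
    (b.digits m).sum ≤ (b - 1) * (Nat.log b m + 1) := by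
  rcases eq_or_ne m 0 with rfl | hm
  · simp
  rw [← Nat.length_digits b m hb hm, mul_comm, ← smul_eq_mul]
  exact List.sum_le_card_nsmul _ _ fun d hd => Nat.le_sub_one_of_lt (Nat.digits_lt_base hb hd)

lemma padicValNat_factorial_eq_sum_Icc {p : ℕ} [Fact p.Prime] (N : ℕ) :
    padicValNat p (N + 1).factorial = ∑ n ∈ Finset.Icc 1 N, padicValNat p (n + 1) := by
  induction N with
  | zero => simp
  | succ N ih =>
    rw [Finset.sum_Icc_succ_top (by omega), ← ih, Nat.factorial_succ (N + 1),
      padicValNat.mul (by omega) (Nat.factorial_ne_zero _), add_comm]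

lemma sum_Icc_padicValNat_two_add_digits_sum (N : ℕ) :
    ∑ n ∈ Finset.Icc 1 N, padicValNat 2 (n + 1) + (Nat.digits 2 (N + 1)).sum = N + 1 := by
  have legendre := sub_one_mul_padicValNat_factorial (p := 2) (N + 1)
  have := Nat.digit_sum_le 2 (N + 1)
  rw [padicValNat_factorial_eq_sum_Icc] at legendre
  omega

lemma padicValNat_two_lt_log {m : ℕ} (hm : m ≠ 0) (h : ¬∃ s : ℕ, m = 2 ^ s) :
    padicValNat 2 m < Nat.log 2 m := by
  refine (padicValNat_le_nat_log m).lt_of_ne fun hlog => h ⟨Nat.log 2 m, ?_⟩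
  refine Nat.eq_of_dvd_of_lt_two_mul hm (hlog ▸ pow_padicValNat_dvd) ?_
  simpa [pow_succ, mul_comm] using Nat.lt_pow_succ_log_self one_lt_two m

lemma cost_of_pow {n s : ℕ} (h : n + 1 = 2 ^ s) : cost n = 1 :=
  if_pos ⟨s, h⟩

lemma cost_of_not_pow {n : ℕ} (h : ¬∃ s : ℕ, n + 1 = 2 ^ s) :
    cost n = padicValNat 2 (n + 1) + 2 :=
  if_neg h

lemma cost_le_padicValNat_add_two (n : ℕ) : cost n ≤ padicValNat 2 (n + 1) + 2 := by
  unfold cost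
  split_ifs <;> omega

lemma cost_le_log_add_one (n : ℕ) : cost n ≤ Nat.log 2 (n + 1) + 1 := by
  by_cases h : ∃ s : ℕ, n + 1 = 2 ^ s
  · obtain ⟨s, hs⟩ := h
    rw [cost_of_pow hs]
    omega
  · have := padicValNat_two_lt_log n.add_one_ne_zero h
    rw [cost_of_not_pow h]
    omega

lemma card_filter_succ_eq_two_pow_le (N : ℕ) :
    (Finset.Icc 1 N |>.filter fun n => ∃ s : ℕ, n + 1 = 2 ^ s).card ≤
      Nat.log 2 (N + 1) + 1 := by
  calc (Finset.Icc 1 N |>.filter fun n => ∃ s : ℕ, n + 1 = 2 ^ s).card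
      ≤ ((Finset.range (Nat.log 2 (N + 1) + 1)).image fun s => 2 ^ s - 1).card := by
        refine Finset.card_le_card fun n hn => ?_
        obtain ⟨hn, s, hs⟩ := Finset.mem_filter.1 hn
        have : s ≤ Nat.log 2 (N + 1) :=
          Nat.le_log_of_pow_le one_lt_two (hs ▸ by simp at hn; omega)
        exact Finset.mem_image.2 ⟨s, Finset.mem_range.2 (by omega), by omega⟩
    _ ≤ Nat.log 2 (N + 1) + 1 := Finset.card_image_le.trans (Finset.card_range _).le

lemma sum_cost_le (N : ℕ) : ∑ n ∈ Finset.Icc 1 N, cost n ≤ 3 * N + 1 := by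
  have hsum := sum_Icc_padicValNat_two_add_digits_sum N
  calc ∑ n ∈ Finset.Icc 1 N, cost n
      ≤ ∑ n ∈ Finset.Icc 1 N, (padicValNat 2 (n + 1) + 2) :=
        Finset.sum_le_sum fun n _ => cost_le_padicValNat_add_two n
    _ ≤ 3 * N + 1 := by
        rw [Finset.sum_add_distrib, Finset.sum_const, Nat.card_Icc, smul_eq_mul]
        omega

lemma le_sum_cost (N : ℕ) :
    3 * N ≤ ∑ n ∈ Finset.Icc 1 N, cost n + (Nat.log 2 (N + 1) + 2) ^ 2 := by
  set L := Nat.log 2 (N + 1)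
  set P : ℕ → Prop := fun n => ∃ s : ℕ, n + 1 = 2 ^ s
  set f : ℕ → ℕ := fun n => padicValNat 2 (n + 1) + 2
  have hsum := sum_Icc_padicValNat_two_add_digits_sum N
  have hdigits : (Nat.digits 2 (N + 1)).sum ≤ L + 1 := by
    simpa using Nat.digits_sum_le_mul_log_add_one one_lt_two (N + 1)
  have htotal :
      ∑ n ∈ Finset.Icc 1 N, f n = ∑ n ∈ Finset.Icc 1 N, padicValNat 2 (n + 1) + 2 * N := by
    simp only [f, Finset.sum_add_distrib, Finset.sum_const, Nat.card_Icc, smul_eq_mul]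
    omega
  have hpow : ∑ n ∈ Finset.Icc 1 N with P n, f n ≤ (L + 1) * (L + 2) := by
    refine (Finset.sum_le_card_nsmul _ _ (L + 2) fun n hn => ?_).trans ?_
    · have hn := (Finset.mem_Icc.1 (Finset.mem_filter.1 hn).1).2
      have := (padicValNat_le_nat_log (p := 2) (n + 1)).trans
        (Nat.log_mono_right (by omega : n + 1 ≤ N + 1))
      simp only [f]
      omega
    · rw [smul_eq_mul]
      exact Nat.mul_le_mul_right _ (card_filter_succ_eq_two_pow_le N)
  have hnot : ∑ n ∈ Finset.Icc 1 N with ¬P n, f n ≤ ∑ n ∈ Finset.Icc 1 N, cost n := by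
    rw [← Finset.sum_congr rfl fun n hn => cost_of_not_pow (Finset.mem_filter.1 hn).2]
    exact Finset.sum_le_sum_of_subset (Finset.filter_subset _ _)
  rw [← Finset.sum_filter_add_sum_filter_not _ P] at htotal
  nlinarith

lemma tendsto_log_add_two_pow_div (k : ℕ) :
    Tendsto (fun N : ℕ => ((Nat.log 2 (N + 1) : ℝ) + 2) ^ k / N) atTop (nhds 0) := by
  have hlog : Tendsto (fun N : ℕ => Nat.log 2 (N + 1) + 2) atTop atTop :=
    tendsto_atTop_atTop.2 fun b => ⟨2 ^ b, fun N hN =>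
      (Nat.le_log_of_pow_le one_lt_two (by omega)).trans (Nat.le_add_right _ 2)⟩
  have hdecay := ((tendsto_pow_const_div_const_pow_of_one_lt k one_lt_two).comp hlog).const_mul 8
  rw [mul_zero] at hdecay
  refine squeeze_zero' (Eventually.of_forall fun N => by positivity) ?_ hdecay
  filter_upwards [eventually_ge_atTop 1] with N hN
  -- `2 ^ log₂(N+1) ≤ N + 1 ≤ 2N`
  have hpow : ((2 : ℝ) ^ (Nat.log 2 (N + 1) + 2)) ≤ 8 * N := by
    have := Nat.pow_log_le_self 2 N.add_one_ne_zero
    rw [pow_add]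
    exact_mod_cast (by omega : 2 ^ Nat.log 2 (N + 1) * 2 ^ 2 ≤ 8 * N)
  calc ((Nat.log 2 (N + 1) : ℝ) + 2) ^ k / N
      ≤ ((Nat.log 2 (N + 1) : ℝ) + 2) ^ k / (2 ^ (Nat.log 2 (N + 1) + 2) / 8) :=
        div_le_div_of_nonneg_left (by positivity) (by positivity) (by linarith)
    _ = _ := by simp only [Function.comp_apply, Nat.cast_add, Nat.cast_ofNat]; ring

/-- (a) The F-MMB append cost satisfies `cost n ≤ ⌊log₂ (n+1)⌋ + 1` for every `n ≥ 1`;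
(b) its Cesàro average tends to `3`. -/
theorem fmmb_append_cost :
    (∀ n : ℕ, 1 ≤ n → cost n ≤ Nat.log 2 (n + 1) + 1) ∧
    Tendsto (fun N : ℕ => (N : ℝ)⁻¹ * ∑ n ∈ Finset.Icc 1 N, (cost n : ℝ))
      atTop (nhds 3) := by
  refine ⟨fun n _ => cost_le_log_add_one n, ?_⟩
  rw [tendsto_iff_norm_sub_tendsto_zero]
  refine squeeze_zero_norm' ?_ (tendsto_log_add_two_pow_div 2)
  filter_upwards [eventually_ge_atTop 1] with N hN
  have hN : (0 : ℝ) < N := by exact_mod_cast hN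
  have hupper :
      ∑ n ∈ Finset.Icc 1 N, (cost n : ℝ) ≤ 3 * N + (Nat.log 2 (N + 1) + 2) ^ 2 := by
    exact_mod_cast (sum_cost_le N).trans (Nat.add_le_add_left (Nat.one_le_pow _ _ (by omega)) _)
  have hlower :
      3 * (N : ℝ) ≤ ∑ n ∈ Finset.Icc 1 N, (cost n : ℝ) + (Nat.log 2 (N + 1) + 2) ^ 2 := by
    exact_mod_cast le_sum_cost N
  have hdiff : 3 - (N : ℝ)⁻¹ * ∑ n ∈ Finset.Icc 1 N, (cost n : ℝ)
      = (3 * N - ∑ n ∈ Finset.Icc 1 N, (cost n : ℝ)) / N := by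
    field_simp
  rw [norm_norm, Real.norm_eq_abs, abs_sub_comm, hdiff, abs_div, Nat.abs_cast]
  exact div_le_div_of_nonneg_right (abs_le.2 ⟨by linarith, by linarith⟩) hN.le
end

section
/- For every integer k ≥ 1, with d := ⌊log₂(k+1)⌋, the following inequalities hold (as real numbers): if 2^d ≤ k+1 < (3/2)·2^d then (11/8)·d + (4(k+1) − 5)/2^{d+1} + 1/16 ≤ (11/8)·log₂((k+1)/3) + 9/2 − 9/(4(k+1)); and if (3/2)·2^d ≤ k+1 < 2^{d+1} then (11/8)·d + (3(k+1) − 6)/2^{d+2} + 2 ≤ (11/8)·log₂((k+1)/3) + 9/2 − 9/(4(k+1)). (These are the upper bounds on the amortized MMB membership-proof size of the k-th newest item, showing it is at most (11/8)·log₂((k+1)/3) + 9/2 − 9/(4(k+1)) hashes.) -/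
set_option maxHeartbeats 1000000

/-- The piecewise upper bounds on the amortized MMB membership-proof size of the
`k`-th newest item are at most `(11/8)·log₂((k+1)/3) + 9/2 − 9/(4(k+1))`, where
`d = ⌊log₂ (k+1)⌋`. -/
theorem mmb_amortized_bound (k : ℕ) (hk : 1 ≤ k) (d : ℕ)
    (hd : d = Nat.log 2 (k + 1)) :
    (2 ^ d ≤ k + 1 → 2 * (k + 1) < 3 * 2 ^ d →
      (11 / 8 : ℝ) * d + (4 * ((k : ℝ) + 1) - 5) / 2 ^ (d + 1) + 1 / 16 ≤
        11 / 8 * Real.logb 2 (((k : ℝ) + 1) / 3) + 9 / 2 - 9 / (4 * ((k : ℝ) + 1))) ∧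
    (3 * 2 ^ d ≤ 2 * (k + 1) → k + 1 < 2 ^ (d + 1) →
      (11 / 8 : ℝ) * d + (3 * ((k : ℝ) + 1) - 6) / 2 ^ (d + 2) + 2 ≤
        11 / 8 * Real.logb 2 (((k : ℝ) + 1) / 3) + 9 / 2 - 9 / (4 * ((k : ℝ) + 1))) := by
  have hlog2 : (0:ℝ) < Real.log 2 := Real.log_pos one_lt_two
  set n : ℝ := (k : ℝ) + 1 with hndef
  set D : ℝ := (2:ℝ) ^ d with hDdef
  have hD0 : (0:ℝ) < D := by positivity
  have hn0 : (0:ℝ) < n := by positivity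
  set L : ℝ := Real.logb 2 3 with hLdef
  have hL : L ≤ 17/10 := by
    rw [hLdef, Real.logb, div_le_iff₀ hlog2]
    have h3 : Real.log ((3:ℝ)^(10:ℕ)) ≤ Real.log ((2:ℝ)^(17:ℕ)) :=
      Real.log_le_log (by positivity) (by norm_num)
    rw [Real.log_pow, Real.log_pow] at h3
    push_cast at h3
    linarith
  have hlogD : Real.logb 2 D = d := by
    rw [hDdef, Real.logb_pow, Real.logb_self_eq_one (by norm_num : (1:ℝ) < 2)]
    ring
  clear_value n D L
  have h32 : L - 1 = Real.log (3/2) / Real.log 2 := by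
    rw [hLdef, Real.logb, Real.log_div (by norm_num) (by norm_num)]
    field_simp
  constructor
  · intro h1 h2
    have hA : D ≤ n := by rw [hDdef, hndef]; exact_mod_cast h1
    have hB : 2 * n < 3 * D := by rw [hDdef, hndef]; exact_mod_cast h2
    set x := n / D with hxdef
    clear_value x
    have hxD : n = x * D := by rw [hxdef]; exact (div_mul_cancel₀ n hD0.ne').symm
    have hx1 : 1 ≤ x := by rw [hxdef]; exact (one_le_div hD0).2 hA
    have hx2 : 2 * x ≤ 3 := by nlinarith [hB, hD0, hxD]
    have hx0 : 0 < x := lt_of_lt_of_le one_pos hx1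
    have hcc := (strictConcaveOn_log_Ioi.concaveOn).2 (Set.mem_Ioi.mpr one_pos)
      (Set.mem_Ioi.mpr (by norm_num : (0:ℝ) < 3/2))
      (show (0:ℝ) ≤ 3 - 2*x by linarith) (show (0:ℝ) ≤ 2*x - 2 by linarith) (by ring)
    simp only [smul_eq_mul] at hcc
    rw [show (3 - 2*x) * 1 + (2*x - 2) * (3/2) = x by ring, Real.log_one] at hcc
    have hsec : (2*x - 2) * (L - 1) ≤ Real.logb 2 x := by
      rw [h32, Real.logb, ← mul_div_assoc]
      exact (div_le_div_iff_of_pos_right hlog2).2 (by linarith)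
    have hsplit : Real.logb 2 (n/3) = Real.logb 2 x + d - L := by
      rw [Real.logb_div hn0.ne' (by norm_num), hxD,
        Real.logb_mul hx0.ne' hD0.ne', hlogD, ← hLdef]
    have hp1 : (2:ℝ)^(d+1) = 2*D := by rw [hDdef, pow_succ]; ring
    rw [hp1, hsplit]
    have e1 : (4*n - 5)/(2*D) = 2*x - 5/(2*D) := by
      rw [hxD]; field_simp; ring
    have e2 : 9/(4*n) ≤ 5/(2*D) := by
      rw [hxD, div_le_div_iff₀ (by positivity) (by positivity)]
      nlinarith
    have key : 2*x - 35/8 ≤ 11/8 * (Real.logb 2 x - L) := by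
      nlinarith [hsec, hL, hx1, hx2,
        mul_nonneg (show (0:ℝ) ≤ 3 - 2*x by linarith)
          (show (0:ℝ) ≤ 2 - (11/4)*(L - 1) by nlinarith)]
    rw [e1]
    linarith [key, e2]
  · intro h1 h2
    have hA : 3 * D ≤ 2 * n := by rw [hDdef, hndef]; exact_mod_cast h1
    have hB : n < 2 * D := by
      rw [hDdef, hndef]
      have := h2
      push_cast
      calc ((k:ℝ) + 1) < (2:ℝ)^(d+1) := by exact_mod_cast h2
        _ = 2 * 2^d := by rw [pow_succ]; ring
    set x := n / D with hxdef
    clear_value x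
    have hxD : n = x * D := by rw [hxdef]; exact (div_mul_cancel₀ n hD0.ne').symm
    have hx1 : 3 ≤ 2 * x := by nlinarith [hA, hD0, hxD]
    have hx2 : x ≤ 2 := by nlinarith [hB, hD0, hxD]
    have hx0 : 0 < x := by linarith
    have hcc := (strictConcaveOn_log_Ioi.concaveOn).2
      (Set.mem_Ioi.mpr (by norm_num : (0:ℝ) < 3/2))
      (Set.mem_Ioi.mpr (by norm_num : (0:ℝ) < 2))
      (show (0:ℝ) ≤ 4 - 2*x by linarith) (show (0:ℝ) ≤ 2*x - 3 by linarith) (by ring)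
    simp only [smul_eq_mul] at hcc
    rw [show (4 - 2*x) * (3/2) + (2*x - 3) * 2 = x by ring] at hcc
    have hsec : (4 - 2*x) * (L - 1) + (2*x - 3) ≤ Real.logb 2 x := by
      have e : (4 - 2*x) * (L - 1) + (2*x - 3)
          = ((4 - 2*x) * Real.log (3/2) + (2*x - 3) * Real.log 2) / Real.log 2 := by
        rw [h32]; field_simp
      rw [e, Real.logb]
      exact (div_le_div_iff_of_pos_right hlog2).2 (by linarith)
    have hsplit : Real.logb 2 (n/3) = Real.logb 2 x + d - L := by
      rw [Real.logb_div hn0.ne' (by norm_num), hxD,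
        Real.logb_mul hx0.ne' hD0.ne', hlogD, ← hLdef]
    have hp2 : (2:ℝ)^(d+2) = 4*D := by rw [hDdef, pow_succ, pow_succ]; ring
    rw [hp2, hsplit]
    have e1 : (3*n - 6)/(4*D) = (3/4)*x - 3/(2*D) := by
      rw [hxD]; field_simp; ring
    have e2 : 9/(4*n) ≤ 3/(2*D) := by
      rw [hxD, div_le_div_iff₀ (by positivity) (by positivity)]
      nlinarith
    have key : (3/4)*x - 5/2 ≤ 11/8 * (Real.logb 2 x - L) := by
      nlinarith [hsec, hL, hx1, hx2,
        mul_nonneg (show (0:ℝ) ≤ 2*x - 3 by linarith)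
          (show (0:ℝ) ≤ (11/4)*(2 - L) - 3/4 by nlinarith)]
    rw [e1]
    linarith [key, e2]
end

section
/- Fix an integer k ≥ 1, let d := ⌊log₂(k+1)⌋, and define b(k,n) := 1 + #{i : 1 ≤ i ≤ p(k,n) and split(n,i)} for n ≥ k (the number of belt-node ancestors of the k-th most recently appended leaf in the MMB structure on n leaves). Then the sequence N ↦ (1/N)·Σ_{n=k}^{k+N−1} b(k,n) converges, and its limit equals (3/8)·d + (k+1)/2^{d+1} + 1/8 if 2^d ≤ k+1 ≤ (3/2)·2^d, and equals (3/8)·d + (k+1)/2^{d+2} + 1/2 if (3/2)·2^d < k+1 < 2^{d+1}. -/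
open Filter

instance (n i : ℕ) : Decidable (Split n i) := by unfold Split; infer_instance

/-- The number of belt-node ancestors of the `k`-th most recently appended leaf in the
MMB structure on `n` leaves. -/
noncomputable def belt (k n : ℕ) : ℕ :=
  1 + ((Finset.Icc 1 (pos k n)).filter (fun i => Split n i)).card

open Finset Function Topology

/-!
Whether level `i ≥ 1` is counted in `belt k n` depends only on `(n + 1) mod 2 ^ (i + 2)`:
`i ≤ pos k n` means `2 ^ i + (n + 1) mod 2 ^ i ≤ k`, and `Split n i` only reads bits `i - 1`,
`i`, `i + 1`. So the count is a sum of periodic indicators and its Cesàro mean is the sum of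
their densities. Modulo `2 ^ (i + 2)` the split pattern fills the block with top bits `01` and
the lower half of the block `11`; for `i < d` the cutoff `≤ k` removes nothing and the density
is `3/8`, while the top level `i = d` is cut off at `k`, which produces the two regimes.
-/

theorem Function.Periodic.sum_Ico_eq_sum_range {M : Type*} [AddCommMonoid M] {f : ℕ → M}
    {T : ℕ} (hf : Periodic f T) (a : ℕ) :
    ∑ n ∈ Ico a (a + T), f n = ∑ n ∈ range T, f n := by
  calc ∑ n ∈ Ico a (a + T), f n = ∑ n ∈ Ico a (a + T), f (n % T) :=
        sum_congr rfl fun n _ => (hf.map_mod_nat n).symm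
    _ = (((Multiset.Ico a (a + T)).map (· % T)).map f).sum := by
        rw [Multiset.map_map]; rfl
    _ = ∑ n ∈ range T, f n := by rw [Nat.multiset_Ico_map_mod]; rfl

theorem tendsto_inv_mul_of_add_period {S : ℕ → ℝ} {T : ℕ} (hT : 0 < T) {P : ℝ}
    (hS : ∀ N, S (N + T) = S N + P) :
    Tendsto (fun N : ℕ => (N : ℝ)⁻¹ * S N) atTop (𝓝 (P / T)) := by
  -- `S N - N * P / T` is `T`-periodic, hence bounded.
  set g : ℕ → ℝ := fun N => S N - N * (P / T)
  have hg : Periodic g T := fun N => by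
    simp only [g, hS, Nat.cast_add]
    field_simp
    ring
  set C := ∑ r ∈ range T, |g r|
  have hC : ∀ N, |g N| ≤ C := fun N => by
    rw [← hg.map_mod_nat N]
    exact single_le_sum (f := fun r => |g r|) (fun _ _ => abs_nonneg _)
      (mem_range.2 (Nat.mod_lt N hT))
  have hg0 : Tendsto (fun N : ℕ => g N / N) atTop (𝓝 0) :=
    squeeze_zero_norm (fun N => by
        rw [norm_div, Real.norm_eq_abs, Real.norm_natCast]
        exact div_le_div_of_nonneg_right (hC N) (Nat.cast_nonneg N))
      (tendsto_const_div_atTop_nhds_zero_nat C)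
  refine (add_zero (P / T) ▸ hg0.const_add (P / T)).congr' ?_
  filter_upwards [eventually_ne_atTop 0] with N hN
  simp only [g]
  field_simp
  ring

theorem Function.Periodic.tendsto_cesaro {f : ℕ → ℝ} {T : ℕ} (hf : Periodic f T) (hT : 0 < T)
    (a : ℕ) :
    Tendsto (fun N : ℕ => (N : ℝ)⁻¹ * ∑ n ∈ Ico a (a + N), f n) atTop
      (𝓝 ((∑ n ∈ range T, f n) / T)) :=
  tendsto_inv_mul_of_add_period hT fun N => by
    rw [← sum_Ico_consecutive f (Nat.le_add_right a N) (by omega : a + N ≤ a + (N + T)),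
      ← add_assoc, hf.sum_Ico_eq_sum_range]

theorem bit_eq_toNat_testBit (i m : ℕ) : bit i m = (m.testBit i).toNat :=
  (Nat.toNat_testBit m i).symm

theorem bit_mod_two_pow {i e : ℕ} (h : i < e) (m : ℕ) : bit i (m % 2 ^ e) = bit i m := by
  simp [bit_eq_toNat_testBit, Nat.testBit_mod_two_pow, h]

theorem monotone_two_pow_add_mod_two_pow (m : ℕ) : Monotone fun j => 2 ^ j + m % 2 ^ j :=
  monotone_nat_of_le_succ fun j => by
    show 2 ^ j + m % 2 ^ j ≤ 2 ^ (j + 1) + m % 2 ^ (j + 1)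
    rw [Nat.mod_pow_succ, pow_succ]
    omega

theorem le_pos_iff {k n i : ℕ} (hk : 1 ≤ k) : i ≤ pos k n ↔ 2 ^ i + (n + 1) % 2 ^ i ≤ k := by
  have hne : {i | k ≤ 2 ^ (i + 1) - 1 + (n + 1) % 2 ^ (i + 1)}.Nonempty :=
    ⟨k, by
      have := Nat.lt_two_pow_self (n := k + 1)
      simp only [Set.mem_ofPred_eq]
      omega⟩
  rw [pos, le_csInf_iff'' hne]
  simp only [Set.mem_ofPred_eq]
  constructor
  · cases i with
    | zero =>
      intro _
      rw [pow_zero, Nat.mod_one]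
      exact hk
    | succ j =>
      intro h
      by_contra hc
      have := h j (by omega)
      omega
  · intro h j hj
    by_contra! hji
    have hmono : 2 ^ (j + 1) + (n + 1) % 2 ^ (j + 1) ≤ 2 ^ i + (n + 1) % 2 ^ i :=
      monotone_two_pow_add_mod_two_pow (n + 1) (Nat.succ_le_of_lt hji)
    have := Nat.one_le_two_pow (n := j + 1)
    omega

/-- Here `r` stands for the residue `(n + 1) % 2 ^ (i + 2)`, see `le_pos_and_split_iff`. -/
def BeltLevel (k i r : ℕ) : Prop :=
  2 ^ i + r % 2 ^ i ≤ k ∧ bit i r = 1 ∧ (bit (i + 1) r = 0 ∨ bit (i - 1) r = 0)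

instance (k i r : ℕ) : Decidable (BeltLevel k i r) := by unfold BeltLevel; infer_instance

theorem le_pos_and_split_iff {k n i : ℕ} (hk : 1 ≤ k) :
    i ≤ pos k n ∧ Split n i ↔ BeltLevel k i ((n + 1) % 2 ^ (i + 2)) := by
  rw [le_pos_iff hk, Split, BeltLevel,
    Nat.mod_mod_of_dvd _ (pow_dvd_pow 2 (Nat.le_add_right i 2)),
    bit_mod_two_pow (by omega), bit_mod_two_pow (by omega), bit_mod_two_pow (by omega)]

theorem belt_eq_one_add_sum {k d : ℕ} (hk : 1 ≤ k) (hd : k + 1 < 2 ^ (d + 1)) (n : ℕ) :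
    (belt k n : ℝ) =
      1 + ∑ j ∈ range d, if BeltLevel k (j + 1) ((n + 1) % 2 ^ (j + 3)) then 1 else 0 := by
  have hpos : pos k n < d + 1 := by
    by_contra! h
    have := (le_pos_iff hk).1 h
    omega
  have hfilter : (Icc 1 (pos k n)).filter (Split n) =
      ((range d).filter fun j => BeltLevel k (j + 1) ((n + 1) % 2 ^ (j + 3))).map
        (addRightEmbedding 1) := by
    ext i
    simp only [mem_filter, mem_Icc, Finset.mem_map, mem_range, addRightEmbedding_apply]
    constructor
    · rintro ⟨⟨hi, hip⟩, hs⟩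
      obtain ⟨j, rfl⟩ := Nat.exists_eq_add_of_le' hi
      exact ⟨j, ⟨by omega, (le_pos_and_split_iff hk).1 ⟨hip, hs⟩⟩, rfl⟩
    · rintro ⟨j, ⟨-, hj⟩, rfl⟩
      obtain ⟨hjp, hs⟩ := (le_pos_and_split_iff hk).2 hj
      exact ⟨⟨Nat.le_add_left 1 j, hjp⟩, hs⟩
  rw [belt, hfilter, card_map, Nat.cast_add, Nat.cast_one, natCast_card_filter]

theorem beltLevel_succ_iff {k j r : ℕ} (hr : r < 2 ^ (j + 3)) :
    BeltLevel k (j + 1) r ↔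
      (2 ^ (j + 1) ≤ r ∧ r < 2 ^ (j + 2) ∧ r ≤ k) ∨
        (3 * 2 ^ (j + 1) ≤ r ∧ r < 3 * 2 ^ (j + 1) + 2 ^ j ∧ r ≤ k + 2 ^ (j + 2)) := by
  have hbit₁ : bit (j + 1) r = r / 2 ^ (j + 1) % 2 := rfl
  have hbit₂ : bit (j + 2) r = r / 2 ^ (j + 1) / 2 % 2 := by
    rw [bit, Nat.div_div_eq_div_mul, ← pow_succ]
  have hbit₀ : bit j r = 0 ↔ r % 2 ^ (j + 1) < 2 ^ j := by
    rw [bit, pow_succ, ← Nat.mod_mul_right_div_self, Nat.div_eq_zero_iff]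
    have := Nat.two_pow_pos j
    omega
  have h₁ : 2 ^ (j + 1) = 2 * 2 ^ j := by ring
  have h₂ : 2 ^ (j + 2) = 4 * 2 ^ j := by ring
  have h₃ : 2 ^ (j + 3) = 8 * 2 ^ j := by ring
  have hdecomp := Nat.div_add_mod r (2 ^ (j + 1))
  have hlo := Nat.mod_lt r (Nat.two_pow_pos (j + 1))
  have hs : r / 2 ^ (j + 1) < 4 := by
    rw [Nat.div_lt_iff_lt_mul (Nat.two_pow_pos _)]
    omega
  rw [BeltLevel, Nat.add_sub_cancel, hbit₀, hbit₁, hbit₂]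
  generalize r / 2 ^ (j + 1) = s at hdecomp hs ⊢
  interval_cases s <;> omega

def beltLevelCount (k j : ℕ) : ℕ :=
  min (2 ^ (j + 1)) (k + 1 - 2 ^ (j + 1)) + min (2 ^ j) (k + 1 - 2 ^ (j + 1))

theorem card_filter_beltLevel (k j : ℕ) :
    ((range (2 ^ (j + 3))).filter (BeltLevel k (j + 1))).card = beltLevelCount k j := by
  have h₁ : 2 ^ (j + 1) = 2 * 2 ^ j := by ring
  have h₂ : 2 ^ (j + 2) = 4 * 2 ^ j := by ring
  have h₃ : 2 ^ (j + 3) = 8 * 2 ^ j := by ring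
  have hblocks : (range (2 ^ (j + 3))).filter (BeltLevel k (j + 1)) =
      Ico (2 ^ (j + 1)) (min (2 ^ (j + 2)) (k + 1)) ∪
        Ico (3 * 2 ^ (j + 1)) (min (3 * 2 ^ (j + 1) + 2 ^ j) (k + 2 ^ (j + 2) + 1)) := by
    ext r
    simp only [mem_filter, mem_range, mem_union, mem_Ico]
    constructor
    · rintro ⟨hr, h⟩
      rw [beltLevel_succ_iff hr] at h
      omega
    · intro h
      have hr : r < 2 ^ (j + 3) := by omega
      exact ⟨hr, (beltLevel_succ_iff hr).2 (by omega)⟩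
  rw [hblocks, card_union_of_disjoint, Nat.card_Ico, Nat.card_Ico, beltLevelCount]
  · omega
  · rw [disjoint_left]
    intro r
    simp only [mem_Ico]
    omega

theorem tendsto_cesaro_beltLevel (k j a : ℕ) :
    Tendsto (fun N : ℕ => (N : ℝ)⁻¹ * ∑ n ∈ Ico a (a + N),
        if BeltLevel k (j + 1) ((n + 1) % 2 ^ (j + 3)) then (1 : ℝ) else 0) atTop
      (𝓝 ((beltLevelCount k j : ℝ) / 2 ^ (j + 3))) := by
  set T := 2 ^ (j + 3)
  set F : ℕ → ℝ := fun r => if BeltLevel k (j + 1) (r % T) then 1 else 0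
  have hF : Periodic F T := fun r => by simp only [F, Nat.add_mod_right]
  have hperiod : ∑ n ∈ range T, F (n + 1) = beltLevelCount k j := by
    calc ∑ n ∈ range T, F (n + 1) = ∑ n ∈ Ico 1 (1 + T), F n := by
          simp only [sum_Ico_eq_sum_range, add_comm 1, Nat.add_sub_cancel]
      _ = ∑ n ∈ range T, F n := hF.sum_Ico_eq_sum_range 1
      _ = ∑ n ∈ range T, if BeltLevel k (j + 1) n then 1 else 0 :=
          sum_congr rfl fun n hn => by simp only [F, Nat.mod_eq_of_lt (mem_range.1 hn)]
      _ = beltLevelCount k j := by rw [sum_boole, card_filter_beltLevel]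
  have h := (hF.add_const 1).tendsto_cesaro (Nat.two_pow_pos _) a
  rw [hperiod, show ((T : ℕ) : ℝ) = 2 ^ (j + 3) by push_cast [T]; rfl] at h
  exact h

theorem tendsto_cesaro_belt {k d : ℕ} (hk : 1 ≤ k) (hd : k + 1 < 2 ^ (d + 1)) (a : ℕ) :
    Tendsto (fun N : ℕ => (N : ℝ)⁻¹ * ∑ n ∈ Ico a (a + N), (belt k n : ℝ)) atTop
      (𝓝 (1 + ∑ j ∈ range d, (beltLevelCount k j : ℝ) / 2 ^ (j + 3))) := by
  have hone := (show Periodic (fun _ => (1 : ℝ)) 1 from fun _ => rfl).tendsto_cesaro one_pos a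
  rw [sum_range_one, Nat.cast_one, div_one] at hone
  refine (hone.add (tendsto_finsetSum _ fun j _ => tendsto_cesaro_beltLevel k j a)).congr
    fun N => ?_
  rw [sum_congr rfl fun n _ => belt_eq_one_add_sum hk hd n, sum_add_distrib,
    sum_comm (s := Ico a _), mul_add, mul_sum (range d)]

theorem beltLevelCount_of_two_pow_le {k j : ℕ} (h : 2 ^ (j + 2) ≤ k + 1) :
    beltLevelCount k j = 3 * 2 ^ j := by
  have h₁ : 2 ^ (j + 1) = 2 * 2 ^ j := by ring
  have h₂ : 2 ^ (j + 2) = 4 * 2 ^ j := by ring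
  rw [beltLevelCount]
  omega

theorem sum_range_beltLevelCount_div {k e : ℕ} (h : 2 ^ (e + 1) ≤ k + 1) :
    ∑ j ∈ range (e + 1), (beltLevelCount k j : ℝ) / 2 ^ (j + 3) =
      3 / 8 * e + (beltLevelCount k e : ℝ) / 2 ^ (e + 3) := by
  have hterm : ∀ j ∈ range e, (beltLevelCount k j : ℝ) / 2 ^ (j + 3) = 3 / 8 := fun j hj => by
    have hj : 2 ^ (j + 2) ≤ 2 ^ (e + 1) :=
      Nat.pow_le_pow_right two_pos (by simp only [mem_range] at hj; omega)
    rw [beltLevelCount_of_two_pow_le (hj.trans h), pow_add]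
    push_cast
    field_simp
    norm_num
  rw [sum_range_succ, sum_congr rfl hterm, sum_const, card_range, nsmul_eq_mul, mul_comm]

theorem beltLevelCount_top_of_le {k e : ℕ} (hlow : 2 ^ (e + 1) ≤ k + 1)
    (hsmall : 2 * (k + 1) ≤ 3 * 2 ^ (e + 1)) :
    (beltLevelCount k e : ℝ) = 2 * (k + 1) - 2 ^ (e + 2) := by
  have h₁ : 2 ^ (e + 1) = 2 * 2 ^ e := by ring
  have h₂ : 2 ^ (e + 2) = 4 * 2 ^ e := by ring
  have : beltLevelCount k e + 2 ^ (e + 2) = 2 * (k + 1) := by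
    rw [beltLevelCount]
    omega
  rw [eq_sub_iff_add_eq]
  exact_mod_cast this

theorem beltLevelCount_top_of_lt {k e : ℕ} (hlarge : 3 * 2 ^ (e + 1) < 2 * (k + 1))
    (hhigh : k + 1 < 2 ^ (e + 2)) :
    (beltLevelCount k e : ℝ) = k + 1 - 2 ^ e := by
  have h₁ : 2 ^ (e + 1) = 2 * 2 ^ e := by ring
  have h₂ : 2 ^ (e + 2) = 4 * 2 ^ e := by ring
  have : beltLevelCount k e + 2 ^ e = k + 1 := by
    rw [beltLevelCount]
    omega
  rw [eq_sub_iff_add_eq]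
  exact_mod_cast this

/-- The amortized number of belt-node ancestors of the `k`-th most recent leaf, with
`d = ⌊log₂ (k+1)⌋`, equals `(3/8)·d + (k+1)/2^(d+1) + 1/8` when
`2^d ≤ k+1 ≤ (3/2)·2^d`, and `(3/8)·d + (k+1)/2^(d+2) + 1/2` when
`(3/2)·2^d < k+1 < 2^(d+1)`. -/
theorem mmb_amortized_belt_nodes (k : ℕ) (hk : 1 ≤ k) (d : ℕ)
    (hd : d = Nat.log 2 (k + 1)) :
    (2 ^ d ≤ k + 1 → 2 * (k + 1) ≤ 3 * 2 ^ d →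
      Tendsto
        (fun N : ℕ => (N : ℝ)⁻¹ * ∑ n ∈ Finset.Ico k (k + N), (belt k n : ℝ))
        atTop
        (nhds (3 / 8 * (d : ℝ) + ((k : ℝ) + 1) / 2 ^ (d + 1) + 1 / 8))) ∧
    (3 * 2 ^ d < 2 * (k + 1) → k + 1 < 2 ^ (d + 1) →
      Tendsto
        (fun N : ℕ => (N : ℝ)⁻¹ * ∑ n ∈ Finset.Ico k (k + N), (belt k n : ℝ))
        atTop
        (nhds (3 / 8 * (d : ℝ) + ((k : ℝ) + 1) / 2 ^ (d + 2) + 1 / 2))) := by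
  have hlow : 2 ^ d ≤ k + 1 := hd ▸ Nat.pow_log_le_self 2 (by omega)
  have hhigh : k + 1 < 2 ^ (d + 1) := hd ▸ Nat.lt_pow_succ_log_self one_lt_two (k + 1)
  obtain ⟨e, rfl⟩ : ∃ e, d = e + 1 := Nat.exists_eq_succ_of_ne_zero fun hd0 => by
    rw [hd0, zero_add, pow_one] at hhigh
    omega
  have hlim := tendsto_cesaro_belt hk hhigh k
  rw [sum_range_beltLevelCount_div hlow] at hlim
  refine ⟨fun _ hsmall => ?_, fun hlarge _ => ?_⟩
  · convert hlim using 2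
    rw [beltLevelCount_top_of_le hlow hsmall]
    push_cast
    field_simp
    ring
  · convert hlim using 2
    rw [beltLevelCount_top_of_lt hlarge hhigh]
    push_cast
    field_simp
    ring
end

section
/- For all natural numbers k, n with 1 ≤ k ≤ n, one has σ(k,n) + p(k,n) + 1 ≤ 2·⌊log₂ k⌋ + 2. That is, the distance from the k-th most recently appended leaf to the root of the F-MMB structure on n leaves — the leaf's mountain height σ(k,n) plus the p(k,n)+1 range nodes above and to the right of its peak — is at most 2·⌊log₂ k⌋ + 2, and hence so is the size in hashes of that leaf's F-MMB membership proof. -/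
/-- The leaf-to-root distance of the `k`-th most recently appended leaf in the F-MMB
structure on `n` leaves — its mountain height plus the `pos k n + 1` range nodes above
and to the right of its peak — is at most `2·⌊log₂ k⌋ + 2`; hence so is the size in
hashes of its F-MMB membership proof. -/
theorem fmmb_proof_size (k n : ℕ) (hk : 1 ≤ k) (hkn : k ≤ n) :
    mheight k n + pos k n + 1 ≤ 2 * Nat.log 2 k + 2 := by
  have hmem : Nat.log 2 k ∈ {i : ℕ | k ≤ 2 ^ (i + 1) - 1 + (n + 1) % 2 ^ (i + 1)} := by
    have h1 : k < 2 ^ (Nat.log 2 k + 1) := Nat.lt_pow_succ_log_self one_lt_two k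
    simp only [Set.mem_setOf_eq]
    omega
  have hpos : pos k n ≤ Nat.log 2 k := Nat.sInf_le hmem
  have hbit : bit (pos k n) (n + 1) ≤ 1 := by
    have := Nat.mod_lt ((n + 1) / 2 ^ (pos k n)) (show 0 < 2 by norm_num)
    unfold bit; omega
  unfold mheight
  omega
end

section
/- Fix an integer k ≥ 1 and let d := ⌊log₂(k+1)⌋. Then for every n ≥ k: (a) p(k, n + 2^{d+1}) = p(k,n) and σ(k, n + 2^{d+1}) = σ(k,n), i.e., the position and height of the mountain containing the k-th newest leaf are periodic in n with period 2^{d+1}; and (b) b(k, n + 2^{d+2}) = b(k,n), where b(k,n) := 1 + #{i : 1 ≤ i ≤ p(k,n) and split(n,i)}, i.e., the number of belt-node ancestors of that leaf is periodic in n with period 2^{d+2}. -/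
lemma mod_pow_trans {i e a b : ℕ} (hie : i ≤ e) (h : a % 2^e = b % 2^e) :
    a % 2^i = b % 2^i := by
  have hd : (2:ℕ)^i ∣ 2^e := pow_dvd_pow 2 hie
  calc a % 2^i = a % 2^e % 2^i := (Nat.mod_mod_of_dvd a hd).symm
    _ = b % 2^e % 2^i := by rw [h]
    _ = b % 2^i := Nat.mod_mod_of_dvd b hd

lemma bit_congr {i a b : ℕ} (h : a % 2^(i+1) = b % 2^(i+1)) : bit i a = bit i b := by
  have key : ∀ m : ℕ, bit i m = m % 2^(i+1) / 2^i := by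
    intro m
    have := Nat.mod_mul_right_div_self m (2^i) 2
    simp [bit, pow_succ, this]
  rw [key, key, h]

lemma pos_le {k n e : ℕ} (hk : k ≤ 2^(e+1) - 1) : pos k n ≤ e :=
  Nat.sInf_le (le_trans hk (Nat.le_add_right _ _))

lemma pos_congr {k a b e : ℕ} (hk : k ≤ 2^(e+1) - 1)
    (hab : (a+1) % 2^(e+1) = (b+1) % 2^(e+1)) : pos k a = pos k b := by
  have hmem : ∀ i ≤ e, ∀ x y : ℕ, (x+1) % 2^(e+1) = (y+1) % 2^(e+1) →
      k ≤ 2 ^ (i + 1) - 1 + (x + 1) % 2 ^ (i + 1) →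
      k ≤ 2 ^ (i + 1) - 1 + (y + 1) % 2 ^ (i + 1) := by
    intro i hi x y hxy hx
    rwa [mod_pow_trans (by omega : i+1 ≤ e+1) hxy] at hx
  have ha : pos k a ≤ e := pos_le hk
  have hb : pos k b ≤ e := pos_le hk
  have hane : {i : ℕ | k ≤ 2 ^ (i + 1) - 1 + (a + 1) % 2 ^ (i + 1)}.Nonempty :=
    ⟨e, le_trans hk (Nat.le_add_right _ _)⟩
  have hbne : {i : ℕ | k ≤ 2 ^ (i + 1) - 1 + (b + 1) % 2 ^ (i + 1)}.Nonempty :=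
    ⟨e, le_trans hk (Nat.le_add_right _ _)⟩
  apply le_antisymm
  · exact Nat.sInf_le (hmem _ hb b a hab.symm (Nat.sInf_mem hbne))
  · exact Nat.sInf_le (hmem _ ha a b hab (Nat.sInf_mem hane))

/-- With `d = ⌊log₂ (k+1)⌋`: the position and height of the mountain containing the
`k`-th newest leaf are periodic in `n` with period `2^(d+1)`, and the number of
belt-node ancestors of that leaf is periodic in `n` with period `2^(d+2)`. -/
theorem mmb_periodicity (k : ℕ) (hk : 1 ≤ k) (d : ℕ)
    (hd : d = Nat.log 2 (k + 1)) :
    ∀ n : ℕ, k ≤ n →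
      pos k (n + 2 ^ (d + 1)) = pos k n ∧
      mheight k (n + 2 ^ (d + 1)) = mheight k n ∧
      belt k (n + 2 ^ (d + 2)) = belt k n := by
  intro n _
  have hlt : k + 1 < 2 ^ (d + 1) := by
    rw [hd]; exact Nat.lt_pow_succ_log_self one_lt_two (k + 1)
  have hk' : k ≤ 2 ^ (d + 1) - 1 := by omega
  have hmod1 : (n + 2 ^ (d + 1) + 1) % 2 ^ (d + 1) = (n + 1) % 2 ^ (d + 1) := by
    rw [show n + 2 ^ (d + 1) + 1 = n + 1 + 2 ^ (d + 1) by ring, Nat.add_mod_right]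
  have hmod2 : (n + 2 ^ (d + 2) + 1) % 2 ^ (d + 2) = (n + 1) % 2 ^ (d + 2) := by
    rw [show n + 2 ^ (d + 2) + 1 = n + 1 + 2 ^ (d + 2) by ring, Nat.add_mod_right]
  have hpos1 : pos k (n + 2 ^ (d + 1)) = pos k n := pos_congr hk' hmod1
  have hmod2' : (n + 2 ^ (d + 2) + 1) % 2 ^ (d + 1) = (n + 1) % 2 ^ (d + 1) :=
    mod_pow_trans (by omega) hmod2
  have hpos2 : pos k (n + 2 ^ (d + 2)) = pos k n := pos_congr hk' hmod2'
  have hpd : pos k n ≤ d := pos_le hk'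
  refine ⟨hpos1, ?_, ?_⟩
  · unfold mheight
    rw [hpos1]
    congr 1
    exact bit_congr (mod_pow_trans (by omega : pos k n + 1 ≤ d + 1) hmod1)
  · unfold belt
    rw [hpos2]
    congr 2
    apply Finset.filter_congr
    intro i hi
    have hi' : i ≤ d := le_trans (Finset.mem_Icc.mp hi).2 hpd
    have hb : ∀ j, j + 1 ≤ d + 2 →
        bit j (n + 2 ^ (d + 2) + 1) = bit j (n + 1) := fun j hj =>
      bit_congr (mod_pow_trans hj hmod2)
    unfold Split
    rw [hb i (by omega), hb (i + 1) (by omega), hb (i - 1) (by omega)]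
end

section
/- For n ≥ 1, define i_max(n) := the greatest i with 1 ≤ i ≤ t(n) − 1 such that split(n,i) holds (and i_max(n) := 0 if no such i exists), and R(n) := t(n) − i_max(n) (the number of mountains in the leftmost range of the MMB structure on n leaves). Then for every natural number s ≥ 0: (a) if 4·2^s ≤ n+1 < 5·2^s then R(n) ≥ 2, and Σ_{n = 4·2^s − 1}^{5·2^s − 2} R(n) = 4·2^s − 2; (b) if 5·2^s ≤ n+1 < 6·2^s then R(n) = 2; (c) if 6·2^s ≤ n+1 < 7·2^s then R(n) = 1; and (d) if 7·2^s ≤ n+1 < 8·2^s then R(n) ≥ 2, and Σ_{n = 7·2^s − 1}^{8·2^s − 2} R(n) = 3·2^s − 1. -/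
/-- The greatest `i` with `1 ≤ i ≤ t(n) − 1` such that `Split n i` holds, and `0` if no
such `i` exists, where `t(n) = ⌊log₂ (n+1)⌋`. -/
noncomputable def imax (n : ℕ) : ℕ :=
  sSup {i : ℕ | 1 ≤ i ∧ i ≤ Nat.log 2 (n + 1) - 1 ∧ Split n i}

/-- The number of mountains in the leftmost range of the MMB structure on `n` leaves. -/
noncomputable def R (n : ℕ) : ℕ := Nat.log 2 (n + 1) - imax n

/-! For `4·2^s ≤ n+1 < 8·2^s` we have `t(n) = s+2`, and the last split is read off the binary
expansion of `n+1`. If bit `s+1` is `0`, write `n+1 = 2^(s+2) + r` with `r < 2^(s+1)`: every bit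
strictly between `log₂ r` and the top bit vanishes, so the last split is at `log₂ r` and
`R(n) = s+2 − log₂ r`. If bit `s+1` is `1`, write `n+1 = 2^(s+3) − (c+1)` with `c < 2^(s+1)`: the
low bits are those of `c` complemented, the top run of ones stops at position `size c`, the last
split sits at its bottom and `R(n) = s+2 − size c`. The four pointwise claims follow by bounding
`log₂ r` and `size c`, and the two sums from the closed forms of `∑_{r<2^s} log₂ r` and
`∑_{c<2^s} size c`, obtained by splitting `[0, 2^(s+1))` into `[0, 2^s)` and `[2^s, 2^(s+1))`. -/

theorem split_iff_testBit {n i : ℕ} :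
    Split n i ↔ (n + 1).testBit i ∧
      ((n + 1).testBit (i + 1) = false ∨ (n + 1).testBit (i - 1) = false) := by
  simp only [Split, bit, ← Nat.toNat_testBit]
  cases (n + 1).testBit i <;> cases (n + 1).testBit (i + 1) <;> cases (n + 1).testBit (i - 1) <;>
    simp

theorem imax_eq_of {n p : ℕ} (hp : p ≤ Nat.log 2 (n + 1) - 1) (hsplit : p = 0 ∨ Split n p)
    (habove : ∀ i, p < i → i ≤ Nat.log 2 (n + 1) - 1 → ¬ Split n i) : imax n = p := by
  refine le_antisymm (csSup_le' fun i ⟨_, hi, hsi⟩ => ?_) ?_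
  · by_contra! hpi
    exact habove i hpi hi hsi
  · rcases Nat.eq_zero_or_pos p with rfl | hpos
    · exact Nat.zero_le _
    · exact le_csSup ⟨_, fun i hi => hi.2.1⟩ ⟨hpos, hp, hsplit.resolve_left hpos.ne'⟩

theorem imax_eq_of_zeros_above {n p T : ℕ} (hT : Nat.log 2 (n + 1) = T)
    (hp : p = 0 ∨ p + 1 < T ∧ (n + 1).testBit p)
    (hzero : ∀ i, p < i → i < T → (n + 1).testBit i = false) : imax n = p := by
  subst hT
  refine imax_eq_of (by omega) ?_ fun i hpi hi hsplit => ?_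
  · exact hp.imp_right fun ⟨hpT, hbit⟩ => split_iff_testBit.2 ⟨hbit, .inl (hzero _ (by omega) hpT)⟩
  · simpa [hzero i hpi (by omega)] using (split_iff_testBit.1 hsplit).1

theorem imax_eq_of_ones_from {n p T : ℕ} (hT : Nat.log 2 (n + 1) = T) (hpT : p < T)
    (hp : p = 0 ∨ (n + 1).testBit (p - 1) = false)
    (hone : ∀ i, p ≤ i → i ≤ T → (n + 1).testBit i) : imax n = p := by
  subst hT
  refine imax_eq_of (by omega) ?_ fun i hpi hi hsplit => ?_
  · exact hp.imp_right fun hbit => split_iff_testBit.2 ⟨hone p le_rfl hpT.le, .inr hbit⟩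
  · rcases (split_iff_testBit.1 hsplit).2 with h | h
    · simp [hone (i + 1) (by omega) (by omega)] at h
    · simp [hone (i - 1) (by omega) (by omega)] at h

theorem testBit_log_two {r : ℕ} (hr : r ≠ 0) : r.testBit (Nat.log 2 r) := by
  rw [← Nat.log2_eq_log_two]
  exact Nat.testBit_log2 hr

theorem R_two_pow_add_sub_one {t r : ℕ} (hr : r < 2 ^ t) :
    R (2 ^ (t + 1) + r - 1) = t + 1 - Nat.log 2 r := by
  have hm : 2 ^ (t + 1) + r - 1 + 1 = 2 ^ (t + 1) + r := by
    have := Nat.one_le_two_pow (n := t + 1); omega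
  have hpow : 2 ^ (t + 1) = 2 * 2 ^ t := by ring
  have hlog : Nat.log 2 (2 ^ (t + 1) + r - 1 + 1) = t + 1 :=
    Nat.log_eq_of_pow_le_of_lt_pow (by omega) (by rw [pow_succ]; omega)
  have hbits : ∀ i < t + 1, (2 ^ (t + 1) + r - 1 + 1).testBit i = r.testBit i := fun i hi => by
    rw [hm, Nat.testBit_two_pow_add_gt hi]
  have hlog_lt : r < 2 ^ (Nat.log 2 r + 1) := Nat.lt_pow_succ_log_self (by norm_num) r
  rw [R, hlog, imax_eq_of_zeros_above hlog ?_ ?_]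
  · rcases lt_or_ge r 2 with hr2 | hr2
    · exact .inl (Nat.log_of_lt hr2)
    · have := Nat.log_lt_of_lt_pow (by omega) hr
      exact .inr ⟨by omega, by rw [hbits _ (by omega)]; exact testBit_log_two (by omega)⟩
  · intro i hpi hi
    rw [hbits i hi]
    exact Nat.testBit_lt_two_pow (hlog_lt.trans_le (Nat.pow_le_pow_right (by norm_num) hpi))

theorem testBit_size_sub_one {c : ℕ} (hc : c ≠ 0) : c.testBit (c.size - 1) := by
  have hpos : 0 < c.size := Nat.pos_of_ne_zero (Nat.size_eq_zero.not.2 hc)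
  apply Nat.testBit_of_two_pow_le_and_two_pow_add_one_gt
  · exact Nat.lt_size.1 (by omega)
  · rw [Nat.sub_add_cancel hpos]; exact Nat.lt_size_self c

theorem R_two_pow_sub_sub_two {t c : ℕ} (hc : c < 2 ^ t) :
    R (2 ^ (t + 2) - c - 2) = t + 1 - c.size := by
  have hpow : 2 ^ (t + 2) = 4 * 2 ^ t := by ring
  have hm : 2 ^ (t + 2) - c - 2 + 1 = 2 ^ (t + 2) - (c + 1) := by omega
  have hlog : Nat.log 2 (2 ^ (t + 2) - c - 2 + 1) = t + 1 :=
    Nat.log_eq_of_pow_le_of_lt_pow (by rw [pow_succ]; omega) (by omega)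
  have hbits : ∀ i, (2 ^ (t + 2) - c - 2 + 1).testBit i = (decide (i < t + 2) && !c.testBit i) :=
    fun i => by rw [hm, Nat.testBit_two_pow_sub_succ (by omega)]
  have hsize : c.size ≤ t := Nat.size_le.2 hc
  rw [R, hlog, imax_eq_of_ones_from (p := c.size) hlog (by omega) ?_ ?_]
  · rcases eq_or_ne c 0 with rfl | hc0
    · exact .inl rfl
    · exact .inr (by simp [hbits, testBit_size_sub_one hc0])
  · intro i hi hit
    have : c.testBit i = false := Nat.testBit_lt_two_pow
      ((Nat.lt_size_self c).trans_le (Nat.pow_le_pow_right (by norm_num) hi))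
    simp only [hbits, this, Bool.not_false, Bool.and_true, decide_eq_true_eq]
    omega

theorem sum_range_two_pow_log (s : ℕ) :
    ∑ r ∈ Finset.range (2 ^ s), Nat.log 2 r + 2 * 2 ^ s = s * 2 ^ s + 2 := by
  induction s with
  | zero => simp
  | succ s ih =>
    have hblock : ∀ r ∈ Finset.range (2 ^ s), Nat.log 2 (2 ^ s + r) = s := fun r hr =>
      Nat.log_eq_of_pow_le_of_lt_pow (by omega)
        (by rw [Finset.mem_range] at hr; rw [pow_succ]; omega)
    rw [pow_succ, mul_two, Finset.sum_range_add, Finset.sum_congr rfl hblock, Finset.sum_const,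
      Finset.card_range, smul_eq_mul]
    linarith

theorem sum_range_two_pow_size (s : ℕ) :
    ∑ c ∈ Finset.range (2 ^ s), c.size + 2 ^ s = s * 2 ^ s + 1 := by
  induction s with
  | zero => simp
  | succ s ih =>
    have hblock : ∀ c ∈ Finset.range (2 ^ s), (2 ^ s + c).size = s + 1 := fun c hc =>
      le_antisymm (Nat.size_le.2 (by rw [Finset.mem_range] at hc; rw [pow_succ]; omega))
        (Nat.lt_size.2 (by omega))
    rw [pow_succ, mul_two, Finset.sum_range_add, Finset.sum_congr rfl hblock, Finset.sum_const,
      Finset.card_range, smul_eq_mul]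
    linarith

theorem R_eq_of_four_mul_two_pow_le {s n : ℕ} (h₁ : 4 * 2 ^ s ≤ n + 1) (h₂ : n + 1 < 6 * 2 ^ s) :
    R n = s + 2 - Nat.log 2 (n + 1 - 4 * 2 ^ s) := by
  have hpow : 2 ^ (s + 1 + 1) = 4 * 2 ^ s := by ring
  have := R_two_pow_add_sub_one (t := s + 1) (r := n + 1 - 4 * 2 ^ s) (by rw [pow_succ]; omega)
  rwa [hpow, show 4 * 2 ^ s + (n + 1 - 4 * 2 ^ s) - 1 = n by omega] at this

theorem R_eq_of_six_mul_two_pow_le {s n : ℕ} (h₁ : 6 * 2 ^ s ≤ n + 1) (h₂ : n + 1 < 8 * 2 ^ s) :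
    R n = s + 2 - (8 * 2 ^ s - 2 - n).size := by
  have hpow : 2 ^ (s + 1 + 2) = 8 * 2 ^ s := by ring
  have := R_two_pow_sub_sub_two (t := s + 1) (c := 8 * 2 ^ s - 2 - n) (by rw [pow_succ]; omega)
  rwa [hpow, show 8 * 2 ^ s - (8 * 2 ^ s - 2 - n) - 2 = n by omega] at this

theorem sum_R_Icc_four_mul_two_pow (s : ℕ) :
    ∑ n ∈ Finset.Icc (4 * 2 ^ s - 1) (5 * 2 ^ s - 2), R n = 4 * 2 ^ s - 2 := by
  have hs := Nat.one_le_two_pow (n := s)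
  have hreindex : ∑ n ∈ Finset.Icc (4 * 2 ^ s - 1) (5 * 2 ^ s - 2), R n =
      ∑ r ∈ Finset.range (2 ^ s), (s + 2 - Nat.log 2 r) :=
    Finset.sum_nbij' (fun n => n + 1 - 4 * 2 ^ s) (fun r => 4 * 2 ^ s + r - 1)
      (fun n hn => by simp only [Finset.mem_Icc, Finset.mem_range] at hn ⊢; omega)
      (fun r hr => by simp only [Finset.mem_Icc, Finset.mem_range] at hr ⊢; omega)
      (fun n hn => by simp only [Finset.mem_Icc] at hn; omega)
      (fun r hr => by simp only [Finset.mem_range] at hr; omega)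
      (fun n hn => by
        simp only [Finset.mem_Icc] at hn
        exact R_eq_of_four_mul_two_pow_le (by omega) (by omega))
  have hlog : ∀ r ∈ Finset.range (2 ^ s), Nat.log 2 r ≤ s + 2 := fun r hr =>
    calc Nat.log 2 r ≤ Nat.log 2 (2 ^ s) := Nat.log_mono_right (Finset.mem_range.1 hr).le
      _ ≤ s + 2 := by rw [Nat.log_pow (by norm_num)]; omega
  rw [hreindex, Finset.sum_tsub_distrib _ hlog, Finset.sum_const, Finset.card_range, smul_eq_mul]
  have := sum_range_two_pow_log s
  rw [mul_add, mul_comm (2 ^ s) s]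
  omega

theorem sum_R_Icc_seven_mul_two_pow (s : ℕ) :
    ∑ n ∈ Finset.Icc (7 * 2 ^ s - 1) (8 * 2 ^ s - 2), R n = 3 * 2 ^ s - 1 := by
  have hs := Nat.one_le_two_pow (n := s)
  have hreindex : ∑ n ∈ Finset.Icc (7 * 2 ^ s - 1) (8 * 2 ^ s - 2), R n =
      ∑ c ∈ Finset.range (2 ^ s), (s + 2 - c.size) :=
    Finset.sum_nbij' (fun n => 8 * 2 ^ s - 2 - n) (fun c => 8 * 2 ^ s - 2 - c)
      (fun n hn => by simp only [Finset.mem_Icc, Finset.mem_range] at hn ⊢; omega)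
      (fun c hc => by simp only [Finset.mem_Icc, Finset.mem_range] at hc ⊢; omega)
      (fun n hn => by simp only [Finset.mem_Icc] at hn; omega)
      (fun c hc => by simp only [Finset.mem_range] at hc; omega)
      (fun n hn => by
        simp only [Finset.mem_Icc] at hn
        exact R_eq_of_six_mul_two_pow_le (by omega) (by omega))
  have hsize : ∀ c ∈ Finset.range (2 ^ s), c.size ≤ s + 2 := fun c hc =>
    (Nat.size_le.2 (Finset.mem_range.1 hc)).trans (by omega)
  rw [hreindex, Finset.sum_tsub_distrib _ hsize, Finset.sum_const, Finset.card_range, smul_eq_mul]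
  have := sum_range_two_pow_size s
  rw [mul_add, mul_comm (2 ^ s) s]
  omega

/-- The number of mountains in the leftmost range of the MMB structure, in the four
sub-intervals `4·2^s ≤ n+1 < 8·2^s`. -/
theorem mmb_leftmost_range (s : ℕ) :
    ((∀ n : ℕ, 4 * 2 ^ s ≤ n + 1 → n + 1 < 5 * 2 ^ s → 2 ≤ R n) ∧
      ∑ n ∈ Finset.Icc (4 * 2 ^ s - 1) (5 * 2 ^ s - 2), R n = 4 * 2 ^ s - 2) ∧
    (∀ n : ℕ, 5 * 2 ^ s ≤ n + 1 → n + 1 < 6 * 2 ^ s → R n = 2) ∧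
    (∀ n : ℕ, 6 * 2 ^ s ≤ n + 1 → n + 1 < 7 * 2 ^ s → R n = 1) ∧
    ((∀ n : ℕ, 7 * 2 ^ s ≤ n + 1 → n + 1 < 8 * 2 ^ s → 2 ≤ R n) ∧
      ∑ n ∈ Finset.Icc (7 * 2 ^ s - 1) (8 * 2 ^ s - 2), R n = 3 * 2 ^ s - 1) := by
  have hpow : 2 ^ (s + 1) = 2 * 2 ^ s := by ring
  refine ⟨⟨fun n h₁ h₂ => ?_, sum_R_Icc_four_mul_two_pow s⟩, fun n h₁ h₂ => ?_,
    fun n h₁ h₂ => ?_, ⟨fun n h₁ h₂ => ?_, sum_R_Icc_seven_mul_two_pow s⟩⟩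
  · have hlog : Nat.log 2 (n + 1 - 4 * 2 ^ s) ≤ s :=
      (Nat.log_mono_right (by omega : n + 1 - 4 * 2 ^ s ≤ 2 ^ s)).trans_eq
        (Nat.log_pow (by norm_num) s)
    rw [R_eq_of_four_mul_two_pow_le h₁ (by omega)]
    omega
  · have hlog : Nat.log 2 (n + 1 - 4 * 2 ^ s) = s :=
      Nat.log_eq_of_pow_le_of_lt_pow (by omega) (by omega)
    rw [R_eq_of_four_mul_two_pow_le (by omega) h₂, hlog]
    omega
  · have hsize : (8 * 2 ^ s - 2 - n).size = s + 1 :=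
      le_antisymm (Nat.size_le.2 (by omega)) (Nat.lt_size.2 (by omega))
    rw [R_eq_of_six_mul_two_pow_le h₁ (by omega), hsize]
    omega
  · have hsize : (8 * 2 ^ s - 2 - n).size ≤ s := Nat.size_le.2 (by omega)
    rw [R_eq_of_six_mul_two_pow_le (by omega) h₂]
    omega
end
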